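/- arXiv:1909.09426 — 10 statements merged into one kernel-verified Lean document; each statement's English description precedes it below -/
import Mathlib

section
/- Let A be a finite dimensional algebra over a field F, σ an F-algebra automorphism of A, and δ a σ-derivation of A. If {a_1,...,a_r} is an F-basis of A, then {a_1,...,a_r} is a basis of the Ore extension S = A[x;σ,δ] as a left module over R = F[x]. -/
/-!
Commuting `X` past `ι b` only produces lower-order terms: `Xᵐ ι b = ι (σᵐ b) Xᵐ + (degree < m)`.
Hence if every `gᵢ` has degree `≤ N`, the `N`-th coefficient of `∑ᵢ gᵢ(X) ι(aᵢ)` is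
`σᴺ (∑ᵢ coeff_N(gᵢ) aᵢ)`. As `σᴺ` is injective and the `aᵢ` are independent, this gives uniqueness.
Existence is by induction on the degree of `s = ∑ₙ ι(bₙ) Xⁿ`: subtracting `Xᴺ ι (σ⁻ᴺ b_N)`, which lies
in the span of the `Xᴺ ι(aᵢ)`, kills the top coefficient.
-/

open Polynomial

namespace OreExtension

variable {F : Type*} [Field F] {A : Type*} [Ring A] [Algebra F A]
  {S : Type*} [Ring S] [Algebra F S] {ι : A →ₐ[F] S} {X : S} {c : S ≃ₗ[F] (ℕ →₀ A)}

lemma coeff_ι_mul_X_pow (hc : ∀ s : S, s = (c s).sum fun n f => ι f * X ^ n) (n : ℕ) (b : A) :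
    c (ι b * X ^ n) = Finsupp.single n b := by
  have h := hc (c.symm (Finsupp.single n b))
  rw [c.apply_symm_apply, Finsupp.sum_single_index (by simp)] at h
  rw [← h, c.apply_symm_apply]

lemma coeff_mul_X_succ (hc : ∀ s : S, s = (c s).sum fun n f => ι f * X ^ n) (s : S) (k : ℕ) :
    c (s * X) (k + 1) = c s k := by
  have hsX : s * X = (c s).sum fun n f => ι f * X ^ (n + 1) := by
    conv_lhs => rw [hc s]
    simp only [Finsupp.sum_mul, mul_assoc, ← pow_succ]
  have hcoeff : c (s * X) = Finsupp.mapDomain (· + 1) (c s) := by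
    rw [hsX, map_finsuppSum]
    simp only [coeff_ι_mul_X_pow hc]
    rfl
  rw [hcoeff, Finsupp.mapDomain_apply (add_left_injective 1)]

variable {σ : A ≃ₐ[F] A} {δ : A →ₗ[F] A}

lemma coeff_X_pow_succ_mul (hc : ∀ s : S, s = (c s).sum fun n f => ι f * X ^ n)
    (hX : ∀ a : A, X * ι a = ι (σ a) * X + ι (δ a)) (m k : ℕ) (b : A) :
    c (X ^ (m + 1) * ι b) (k + 1) = c (X ^ m * ι (σ b)) k + c (X ^ m * ι (δ b)) (k + 1) := by
  have h : X ^ (m + 1) * ι b = X ^ m * ι (σ b) * X + X ^ m * ι (δ b) := by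
    rw [pow_succ, mul_assoc, hX, mul_add, ← mul_assoc]
  rw [h, map_add c, Finsupp.add_apply, coeff_mul_X_succ hc]

lemma coeff_X_pow_mul_of_lt (hc : ∀ s : S, s = (c s).sum fun n f => ι f * X ^ n)
    (hX : ∀ a : A, X * ι a = ι (σ a) * X + ι (δ a)) {m k : ℕ} (hmk : m < k) (b : A) :
    c (X ^ m * ι b) k = 0 := by
  induction m generalizing b k with
  | zero =>
    rw [pow_zero, one_mul, ← mul_one (ι b), ← pow_zero X, coeff_ι_mul_X_pow hc,
      Finsupp.single_eq_of_ne (by omega)]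
  | succ m ih =>
    obtain ⟨k, rfl⟩ : ∃ j, k = j + 1 := ⟨k - 1, by omega⟩
    rw [coeff_X_pow_succ_mul hc hX, ih (by omega), ih (by omega), add_zero]

lemma coeff_X_pow_mul_self (hc : ∀ s : S, s = (c s).sum fun n f => ι f * X ^ n)
    (hX : ∀ a : A, X * ι a = ι (σ a) * X + ι (δ a)) (m : ℕ) (b : A) :
    c (X ^ m * ι b) m = (σ ^ m) b := by
  induction m generalizing b with
  | zero =>
    rw [pow_zero, one_mul, ← mul_one (ι b), ← pow_zero X, coeff_ι_mul_X_pow hc,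
      Finsupp.single_eq_same]
    rfl
  | succ m ih =>
    rw [coeff_X_pow_succ_mul hc hX, ih, coeff_X_pow_mul_of_lt hc hX (by omega), add_zero,
      pow_succ, AlgEquiv.mul_apply]

lemma coeff_aeval_mul_of_natDegree_le (hc : ∀ s : S, s = (c s).sum fun n f => ι f * X ^ n)
    (hX : ∀ a : A, X * ι a = ι (σ a) * X + ι (δ a)) {p : F[X]} {k : ℕ} (hp : p.natDegree ≤ k)
    (b : A) : c (aeval X p * ι b) k = p.coeff k • (σ ^ k) b := by
  rw [aeval_eq_sum_range' (Nat.lt_succ_of_le hp), Finset.sum_mul, map_sum,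
    Finsupp.finsetSum_apply, Finset.sum_eq_single_of_mem k (by simp)]
  · rw [smul_mul_assoc, map_smul, Finsupp.smul_apply, coeff_X_pow_mul_self hc hX]
  · intro j hj hjk
    rw [smul_mul_assoc, map_smul, Finsupp.smul_apply,
      coeff_X_pow_mul_of_lt hc hX (by simp at hj; omega), smul_zero]

variable {n : Type*} [Fintype n]

variable (ι X) in
noncomputable def leftCombination (v : n → A) : (n → F[X]) →ₗ[F] S where
  toFun g := ∑ i, aeval X (g i) * ι (v i)
  map_add' g h := by simp only [Pi.add_apply, map_add, add_mul, Finset.sum_add_distrib]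
  map_smul' r g := by simp only [Pi.smul_apply, map_smul, smul_mul_assoc, Finset.smul_sum,
    RingHom.id_apply]

lemma coeff_leftCombination (hc : ∀ s : S, s = (c s).sum fun n f => ι f * X ^ n)
    (hX : ∀ a : A, X * ι a = ι (σ a) * X + ι (δ a)) (v : n → A) {g : n → F[X]} {k : ℕ}
    (hg : ∀ i, (g i).natDegree ≤ k) :
    c (leftCombination ι X v g) k = (σ ^ k) (∑ i, (g i).coeff k • v i) := by
  simp only [leftCombination, LinearMap.coe_mk, AddHom.coe_mk, map_sum, Finsupp.finsetSum_apply,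
    map_smul, coeff_aeval_mul_of_natDegree_le hc hX (hg _)]

lemma leftCombination_injective (hc : ∀ s : S, s = (c s).sum fun n f => ι f * X ^ n)
    (hX : ∀ a : A, X * ι a = ι (σ a) * X + ι (δ a)) (a : Module.Basis n F A) :
    Function.Injective (leftCombination ι X a) := by
  classical
  refine (injective_iff_map_eq_zero _).mpr fun g hg => ?_
  by_contra hne
  obtain ⟨i₀, hi₀⟩ := Function.ne_iff.mp hne
  obtain ⟨j, hj, hmax⟩ := Finset.exists_max_image {i | g i ≠ 0} (fun i => (g i).natDegree)
    ⟨i₀, by simpa using hi₀⟩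
  have hdeg : ∀ i, (g i).natDegree ≤ (g j).natDegree := fun i => by
    by_cases hi : g i = 0
    · simp [hi]
    · exact hmax i (by simpa using hi)
  have htop : ∑ i, (g i).coeff (g j).natDegree • a i = 0 :=
    (σ ^ (g j).natDegree).injective <| by
      rw [← coeff_leftCombination hc hX a hdeg, hg, map_zero, Finsupp.zero_apply, map_zero]
  have hlead := Fintype.linearIndependent_iff.mp a.linearIndependent _ htop j
  rw [coeff_natDegree, leadingCoeff_eq_zero] at hlead
  simp [hlead] at hj

lemma X_pow_mul_mem_range_leftCombination (a : Module.Basis n F A) (m : ℕ) (b : A) :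
    X ^ m * ι b ∈ LinearMap.range (leftCombination ι X a) := by
  classical
  have hbasis (i : n) : X ^ m * ι (a i) = leftCombination ι X a (Pi.single i (Polynomial.X ^ m)) := by
    simp [leftCombination, Pi.single_apply, apply_ite (aeval X), ite_mul]
  rw [← a.sum_repr b, map_sum, Finset.mul_sum]
  refine Submodule.sum_mem _ fun i _ => ?_
  rw [map_smul, mul_smul_comm, hbasis]
  exact Submodule.smul_mem _ _ (LinearMap.mem_range_self _ _)

lemma leftCombination_surjective (hc : ∀ s : S, s = (c s).sum fun n f => ι f * X ^ n)
    (hX : ∀ a : A, X * ι a = ι (σ a) * X + ι (δ a)) (a : Module.Basis n F A) :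
    Function.Surjective (leftCombination ι X a) := by
  suffices h : ∀ N (s : S), (∀ k, N ≤ k → c s k = 0) → s ∈ LinearMap.range (leftCombination ι X a)
  · intro s
    refine h ((c s).support.sup id + 1) s fun k hk => Finsupp.notMem_support_iff.mp fun hmem => ?_
    have := Finset.le_sup (f := id) hmem
    simp only [id] at this
    omega
  intro N
  induction N with
  | zero =>
    intro s hs
    rw [show s = 0 from c.map_eq_zero_iff.mp (Finsupp.ext fun k => hs k k.zero_le)]
    exact zero_mem _
  | succ N ih =>
    intro s hs
    set t := X ^ N * ι ((σ ^ N).symm (c s N))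
    have hst : ∀ k, N ≤ k → c (s - t) k = 0 := fun k hk => by
      rcases hk.eq_or_lt with rfl | hlt
      · rw [map_sub, Finsupp.sub_apply, coeff_X_pow_mul_self hc hX, AlgEquiv.apply_symm_apply,
          sub_self]
      · rw [map_sub, Finsupp.sub_apply, coeff_X_pow_mul_of_lt hc hX hlt, hs k hlt, sub_self]
    rw [← sub_add_cancel s t]
    exact add_mem (ih (s - t) hst) (X_pow_mul_mem_range_leftCombination a N _)

end OreExtension

open OreExtension in
theorem ore_left_basis_general
    (F : Type*) [Field F] (A : Type*) [Ring A] [Algebra F A]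
    (σ : A ≃ₐ[F] A) (δ : A →ₗ[F] A)
    (S : Type*) [Ring S] [Algebra F S]
    (ι : A →ₐ[F] S) (X : S)
    (hX : ∀ a : A, X * ι a = ι (σ a) * X + ι (δ a))
    (c : S ≃ₗ[F] (ℕ →₀ A))
    (hc : ∀ s : S, s = (c s).sum fun n f => ι f * X ^ n)
    (r : ℕ) (a : Module.Basis (Fin r) F A) :
    ∀ s : S, ∃! g : Fin r → Polynomial F,
      s = ∑ i : Fin r, Polynomial.aeval X (g i) * ι (a i) := by
  intro s
  have hbij : Function.Bijective (leftCombination ι X a) :=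
    ⟨leftCombination_injective hc hX a, leftCombination_surjective hc hX a⟩
  simpa only [eq_comm, leftCombination, LinearMap.coe_mk, AddHom.coe_mk] using hbij.existsUnique s

/-- STATEMENT 0: If `{a 1, ..., a r}` is an `F`-basis of the finite dimensional
`F`-algebra `A`, then it is a basis of the Ore extension `S = A[x;σ,δ]` as a left
module over `R = F[x]` (embedded in `S` via `aeval X`).  The Ore extension is
presented by an algebra map `ι : A → S`, an element `X` with `X * ι a = ι (σ a) * X + ι (δ a)`,
and a coefficient isomorphism `c : S ≃ (ℕ →₀ A)` reconstructing each element as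
`∑ ι (coefficient n) * X ^ n`. -/
theorem ore_left_basis
    (F : Type*) [Field F] (A : Type*) [Ring A] [Algebra F A] [FiniteDimensional F A]
    (σ : A ≃ₐ[F] A) (δ : A →ₗ[F] A)
    (hder : ∀ a b : A, δ (a * b) = σ a * δ b + δ a * b)
    (S : Type*) [Ring S] [Algebra F S]
    (ι : A →ₐ[F] S) (X : S)
    (hX : ∀ a : A, X * ι a = ι (σ a) * X + ι (δ a))
    (c : S ≃ₗ[F] (ℕ →₀ A))
    (hc : ∀ s : S, s = (c s).sum fun n f => ι f * X ^ n)
    (r : ℕ) (a : Module.Basis (Fin r) F A) :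
    ∀ s : S, ∃! g : Fin r → Polynomial F,
      s = ∑ i : Fin r, Polynomial.aeval X (g i) * ι (a i) :=
  ore_left_basis_general F A σ δ S ι X hX c hc r a
end

section
/- Let A be a finite dimensional F-algebra and ε : A → F a Frobenius functional (an F-linear map whose kernel contains no nonzero right ideal). Define α_ε : S → S* = Hom(S_R, R_R) (where S = A[x;σ,δ], R = F[x]) as the right S-linear map with α_ε(1)(Σ f_i x^i) = Σ ε(f_i) x^i. Then α_ε is injective. -/
/-!
Write `d = s - t`; the hypothesis says that `ε` kills every coefficient of `d * u` for all `u`.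
If `d ≠ 0`, let `j` be the top index of its coefficients. Moving `ι a` past `X ^ j` produces
`ι (σ^j a) * X ^ j` plus terms of lower degree, so the `j`-th coefficient of `d * ι a` is
`d_j * σ^j a`. As `σ^j` is surjective, `ε (d_j * u) = 0` for all `u`, and the Frobenius
property forces `d_j = 0`, a contradiction.
-/

section OreExtension

variable {A S : Type*} [Ring A] [Ring S] (ι : A →+* S) (X : S) (c : S ≃+ (ℕ →₀ A))
  (hc : ∀ s : S, s = (c s).sum fun n f => ι f * X ^ n)
include hc

theorem coeffs_sum_mul_pow (g : ℕ →₀ A) : c (g.sum fun n f => ι f * X ^ n) = g := by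
  obtain ⟨s, rfl⟩ := c.surjective g
  rw [← hc s]

theorem coeffs_mul_pow (a : A) (n : ℕ) : c (ι a * X ^ n) = Finsupp.single n a := by
  simpa using coeffs_sum_mul_pow ι X c hc (Finsupp.single n a)

theorem coeff_mul_eq_zero_of_le {n : ℕ} {r : S} (hr : ∀ k, n ≤ k → c r k = 0) (f : A) :
    ∀ k, n ≤ k → c (ι f * r) k = 0 := by
  intro k hk
  have hexpand : ι f * r = (c r).sum fun i g => ι (f * g) * X ^ i := by
    conv_lhs => rw [hc r, Finsupp.mul_sum]
    exact Finsupp.sum_congr fun i _ => by rw [← mul_assoc, ← map_mul]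
  rw [hexpand, map_finsuppSum, Finsupp.sum_apply, Finsupp.sum]
  refine Finset.sum_eq_zero fun i hi => ?_
  have hin : i < n := by
    by_contra! h
    exact Finsupp.mem_support_iff.mp hi (hr i h)
  rw [coeffs_mul_pow ι X c hc, Finsupp.single_eq_of_ne (by omega)]

variable {σ δ : A → A} (hX : ∀ a : A, X * ι a = ι (σ a) * X + ι (δ a))
include hX

theorem coeff_X_mul_eq_zero_of_le {n : ℕ} {r : S} (hr : ∀ k, n ≤ k → c r k = 0) :
    ∀ k, n + 1 ≤ k → c (X * r) k = 0 := by
  intro k hk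
  have hexpand : X * r = (c r).sum fun i g => ι (σ g) * X ^ (i + 1) + ι (δ g) * X ^ i := by
    conv_lhs => rw [hc r, Finsupp.mul_sum]
    refine Finsupp.sum_congr fun i _ => ?_
    rw [← mul_assoc, hX, add_mul, mul_assoc, ← pow_succ']
  rw [hexpand, map_finsuppSum, Finsupp.sum_apply, Finsupp.sum]
  refine Finset.sum_eq_zero fun i hi => ?_
  have hin : i < n := by
    by_contra! h
    exact Finsupp.mem_support_iff.mp hi (hr i h)
  rw [map_add, Finsupp.add_apply, coeffs_mul_pow ι X c hc, coeffs_mul_pow ι X c hc,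
    Finsupp.single_eq_of_ne (by omega), Finsupp.single_eq_of_ne (by omega), add_zero]

theorem exists_pow_mul_eq_add_lower (a : A) (n : ℕ) :
    ∃ r : S, X ^ n * ι a = ι (σ^[n] a) * X ^ n + r ∧ ∀ k, n ≤ k → c r k = 0 := by
  induction n with
  | zero => exact ⟨0, by simp, by simp⟩
  | succ n ih =>
    obtain ⟨r, hcomm, hr⟩ := ih
    refine ⟨ι (δ (σ^[n] a)) * X ^ n + X * r, ?_, ?_⟩
    · rw [pow_succ', mul_assoc, hcomm, mul_add, ← mul_assoc, hX, add_mul, mul_assoc,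
        ← pow_succ', Function.iterate_succ_apply', add_assoc]
    · intro k hk
      rw [map_add, Finsupp.add_apply, coeffs_mul_pow ι X c hc,
        Finsupp.single_eq_of_ne (by omega), coeff_X_mul_eq_zero_of_le ι X c hc hX hr k hk,
        add_zero]

theorem coeff_mul_of_forall_gt_eq_zero {d : S} {j : ℕ} (hd : ∀ i, j < i → c d i = 0) (a : A) :
    c (d * ι a) j = c d j * σ^[j] a := by
  choose r hcomm hr using exists_pow_mul_eq_add_lower ι X c hc hX a
  have hexpand : d * ι a = (c d).sum fun i f => ι (f * σ^[i] a) * X ^ i + ι f * r i := by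
    conv_lhs => rw [hc d, Finsupp.sum_mul]
    refine Finsupp.sum_congr fun i _ => ?_
    rw [mul_assoc, hcomm i, mul_add, ← mul_assoc, ← map_mul]
  have hterm : ∀ i ∈ (c d).support,
      c (ι (c d i * σ^[i] a) * X ^ i + ι (c d i) * r i) j =
        if i = j then c d i * σ^[i] a else 0 := by
    intro i hi
    have hij : i ≤ j := by
      by_contra! h
      exact Finsupp.mem_support_iff.mp hi (hd i h)
    rw [map_add, Finsupp.add_apply, coeffs_mul_pow ι X c hc, Finsupp.single_apply,
      coeff_mul_eq_zero_of_le ι X c hc (hr i) _ j hij, add_zero]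
  rw [hexpand, map_finsuppSum, Finsupp.sum_apply, Finsupp.sum, Finset.sum_congr rfl hterm,
    Finset.sum_ite_eq']
  split_ifs with hj
  · rfl
  · rw [Finsupp.notMem_support_iff.mp hj, zero_mul]

end OreExtension

theorem Polynomial.coeff_finsuppSum_monomial {R M G : Type*} [Semiring R] [AddCommMonoid M]
    [FunLike G M R] [AddMonoidHomClass G M R] (ε : G) (g : ℕ →₀ M) (k : ℕ) :
    (g.sum fun n f => monomial n (ε f)).coeff k = ε (g k) := by
  simp +contextual [Finsupp.sum, finsetSum_coeff, coeff_monomial]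

theorem ore_alpha_injective_general
    (F : Type*) [Field F] (A : Type*) [Ring A] [Algebra F A]
    (σ : A ≃ₐ[F] A) (δ : A →ₗ[F] A)
    (S : Type*) [Ring S] [Algebra F S]
    (ι : A →ₐ[F] S) (X : S)
    (hX : ∀ a : A, X * ι a = ι (σ a) * X + ι (δ a))
    (c : S ≃ₗ[F] (ℕ →₀ A))
    (hc : ∀ s : S, s = (c s).sum fun n f => ι f * X ^ n)
    (ε : A →ₗ[F] F)
    (hker : ∀ f : A, (∀ u : A, ε (f * u) = 0) → f = 0) :
    ∀ s t : S,
      (∀ u : S,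
        ((c (s * u)).sum fun n f => (Polynomial.monomial n (ε f) : Polynomial F)) =
          (c (t * u)).sum fun n f => (Polynomial.monomial n (ε f) : Polynomial F)) →
      s = t := by
  intro s t h
  have hvanish : ∀ (u : S) (k : ℕ), ε (c ((s - t) * u) k) = 0 := fun u k => by
    have hk := congrArg (Polynomial.coeff · k) (h u)
    simp only [Polynomial.coeff_finsuppSum_monomial] at hk
    rw [sub_mul, map_sub, Finsupp.sub_apply, map_sub, hk, sub_self]
  suffices c (s - t) = 0 from sub_eq_zero.mp (c.map_eq_zero_iff.mp this)
  by_contra hne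
  have hsupp := Finsupp.support_nonempty_iff.mpr hne
  set j := (c (s - t)).support.max' hsupp
  have hj : j ∈ (c (s - t)).support := (c (s - t)).support.max'_mem hsupp
  have htop : ∀ i, j < i → c (s - t) i = 0 := fun i hi =>
    Finsupp.notMem_support_iff.mp fun hi' => hi.not_ge ((c (s - t)).support.le_max' i hi')
  refine Finsupp.mem_support_iff.mp hj (hker _ fun u => ?_)
  obtain ⟨a, rfl⟩ := σ.surjective.iterate j u
  have hcoeff : c ((s - t) * ι a) j = c (s - t) j * σ^[j] a :=
    coeff_mul_of_forall_gt_eq_zero (ι : A →+* S) X c.toAddEquiv hc hX htop a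
  rw [← hcoeff]
  exact hvanish _ j

/-- for a Frobenius functional `ε : A → F` (an `F`-linear map whose kernel
contains no nonzero right ideal, expressed via principal right ideals), the right
`S`-linear map `α_ε : S → S* = Hom(S_R, R_R)` determined by
`α_ε(1)(∑ f_i x^i) = ∑ ε(f_i) x^i` is injective.  Since `α_ε(s)(u) = α_ε(1)(s*u)`,
injectivity is expressed through the coefficientwise application of `ε`. -/
theorem ore_alpha_injective
    (F : Type*) [Field F] (A : Type*) [Ring A] [Algebra F A] [FiniteDimensional F A]
    (σ : A ≃ₐ[F] A) (δ : A →ₗ[F] A)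
    (hder : ∀ a b : A, δ (a * b) = σ a * δ b + δ a * b)
    (S : Type*) [Ring S] [Algebra F S]
    (ι : A →ₐ[F] S) (X : S)
    (hX : ∀ a : A, X * ι a = ι (σ a) * X + ι (δ a))
    (c : S ≃ₗ[F] (ℕ →₀ A))
    (hc : ∀ s : S, s = (c s).sum fun n f => ι f * X ^ n)
    (ε : A →ₗ[F] F)
    (hker : ∀ f : A, (∀ u : A, ε (f * u) = 0) → f = 0) :
    ∀ s t : S,
      (∀ u : S,
        ((c (s * u)).sum fun n f => (Polynomial.monomial n (ε f) : Polynomial F)) =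
          (c (t * u)).sum fun n f => (Polynomial.monomial n (ε f) : Polynomial F)) →
      s = t :=
  ore_alpha_injective_general F A σ δ S ι X hX c hc ε hker
end

section
/- A right S-module isomorphism α : S → S* corresponding to a Frobenius functional ε (via α(a)(b)-type evaluation, with α determined by α(1)(Σf_i x^i) = Σ ε(f_i)x^i) is additionally left R-linear if and only if ε ∘ σ = ε and ε ∘ δ = 0. -/
/-!
Write `χ = α 1`; right `S`-linearity of `α` gives `α s u = χ (s u)`, so left `R`-linearity of `α`
amounts to `χ (X v) = X χ(v)` for all `v`. Since `χ` applies `ε` to the coefficients in the left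
`A`-basis `(X ^ n)`, and `X (f X ^ n) = σ(f) X ^ (n + 1) + δ(f) X ^ n`, this is an identity of
polynomials whose coefficients are exactly `ε (σ f) = ε f` and `ε (δ f) = 0`.
-/

open Polynomial

section OreExtension

variable {F A S : Type*} [CommSemiring F] [Semiring A] [Algebra F A] [Semiring S] [Algebra F S]

theorem map_aeval_mul_of_map_X_mul {X : S} {χ : S →ₗ[F] F[X]}
    (hχX : ∀ v, χ (X * v) = Polynomial.X * χ v) (r : F[X]) (v : S) :
    χ (aeval X r * v) = r * χ v := by
  induction r using Polynomial.induction_on generalizing v with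
  | C a => rw [aeval_C, ← Algebra.smul_def, map_smul, smul_eq_C_mul]
  | add p q hp hq => rw [map_add, add_mul, map_add, hp, hq, add_mul]
  | monomial n a ih =>
    have hX_mul : C a * Polynomial.X ^ (n + 1) = Polynomial.X * (C a * Polynomial.X ^ n) := by ring
    rw [hX_mul, _root_.map_mul (aeval X), aeval_X, mul_assoc, hχX, ih, ← mul_assoc]

theorem map_aeval_mul_iff_map_X_mul {X : S} {χ : S →ₗ[F] F[X]} :
    (∀ r v, χ (aeval X r * v) = r * χ v) ↔ ∀ v, χ (X * v) = Polynomial.X * χ v :=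
  ⟨fun h v => by simpa using h Polynomial.X v, map_aeval_mul_of_map_X_mul⟩

variable {ι : A →ₐ[F] S} {X : S} {c : S ≃ₗ[F] (ℕ →₀ A)}

theorem coeffs_mul_X_pow (hc : ∀ s, s = (c s).sum fun n f => ι f * X ^ n) (f : A) (n : ℕ) :
    c (ι f * X ^ n) = Finsupp.single n f := by
  apply c.symm.injective
  rw [c.symm_apply_apply, hc (c.symm _), c.apply_symm_apply,
    Finsupp.sum_single_index (by rw [map_zero, zero_mul])]

variable {ε : A →ₗ[F] F} {χ : S →ₗ[F] F[X]}

theorem map_mul_X_pow (hc : ∀ s, s = (c s).sum fun n f => ι f * X ^ n)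
    (hχ : ∀ s, χ s = (c s).sum fun n f => monomial n (ε f)) (f : A) (n : ℕ) :
    χ (ι f * X ^ n) = monomial n (ε f) := by
  rw [hχ, coeffs_mul_X_pow hc, Finsupp.sum_single_index (by rw [map_zero, monomial_zero_right])]

variable {σ δ : A → A}

theorem X_mul_mul_X_pow (hX : ∀ a, X * ι a = ι (σ a) * X + ι (δ a)) (f : A) (n : ℕ) :
    X * (ι f * X ^ n) = ι (σ f) * X ^ (n + 1) + ι (δ f) * X ^ n := by
  rw [← mul_assoc, hX, add_mul, mul_assoc, ← pow_succ']

theorem map_X_mul_iff (hX : ∀ a, X * ι a = ι (σ a) * X + ι (δ a))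
    (hc : ∀ s, s = (c s).sum fun n f => ι f * X ^ n)
    (hχ : ∀ s, χ s = (c s).sum fun n f => monomial n (ε f)) :
    (∀ v, χ (X * v) = Polynomial.X * χ v) ↔ (∀ a, ε (σ a) = ε a) ∧ ∀ a, ε (δ a) = 0 := by
  have hbasis (f : A) (n : ℕ) : χ (X * (ι f * X ^ n)) =
      monomial (n + 1) (ε (σ f)) + monomial n (ε (δ f)) := by
    rw [X_mul_mul_X_pow hX, map_add, map_mul_X_pow hc hχ, map_mul_X_pow hc hχ]
  constructor
  · intro h
    have hdeg1 (f : A) : monomial 1 (ε (σ f)) + monomial 0 (ε (δ f)) = monomial 1 (ε f) := by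
      rw [← hbasis f 0, h, map_mul_X_pow hc hχ, X_mul_monomial]
    exact ⟨fun f => by simpa using congrArg (coeff · 1) (hdeg1 f),
      fun f => by simpa using congrArg (coeff · 0) (hdeg1 f)⟩
  · rintro ⟨hσ, hδ⟩ v
    rw [hc v, Finsupp.mul_sum, map_finsuppSum, map_finsuppSum, Finsupp.mul_sum]
    refine Finsupp.sum_congr fun n _ => ?_
    rw [hbasis, hσ, hδ, monomial_zero_right, add_zero, map_mul_X_pow hc hχ, X_mul_monomial]

end OreExtension

theorem ore_alpha_left_linear_iff_general
    (F : Type*) [Field F] (A : Type*) [Ring A] [Algebra F A]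
    (σ : A ≃ₐ[F] A) (δ : A →ₗ[F] A)
    (S : Type*) [Ring S] [Algebra F S]
    (ι : A →ₐ[F] S) (X : S)
    (hX : ∀ a : A, X * ι a = ι (σ a) * X + ι (δ a))
    (c : S ≃ₗ[F] (ℕ →₀ A))
    (hc : ∀ s : S, s = (c s).sum fun n f => ι f * X ^ n)
    (ε : A →ₗ[F] F)
    (α : S → {χ : S →ₗ[F] Polynomial F //
        ∀ (u : S) (r : Polynomial F), χ (u * Polynomial.aeval X r) = χ u * r})
    (hmulS : ∀ s t u : S, (α (s * t)).1 u = (α s).1 (t * u))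
    (hα1 : ∀ s : S, (α 1).1 s = (c s).sum fun n f => (Polynomial.monomial n (ε f) : Polynomial F)) :
    (∀ (r : Polynomial F) (s u : S),
        (α (Polynomial.aeval X r * s)).1 u = r * (α s).1 u) ↔
      ((∀ a : A, ε (σ a) = ε a) ∧ (∀ a : A, ε (δ a) = 0)) := by
  have hα (s u : S) : (α s).1 u = (α 1).1 (s * u) := by rw [← hmulS, one_mul]
  rw [← map_X_mul_iff hX hc hα1, ← map_aeval_mul_iff_map_X_mul]
  refine ⟨fun h r v => ?_, fun h r s u => ?_⟩
  · rw [← hα]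
    simpa using h r 1 v
  · rw [hα (aeval X r * s), hα s, mul_assoc, h]

/-- let `α : S → S*` be the right `S`-module isomorphism corresponding
to a Frobenius functional `ε` (so `α 1` applies `ε` coefficientwise).  Then `α` is
additionally left `R`-linear — `α (r(X) * s) (u) = r * α s (u)`, for the left
`R`-module structure `(r χ)(u) = r * χ(u)` on `S*` — if and only if `ε ∘ σ = ε`
and `ε ∘ δ = 0`. -/
theorem ore_alpha_left_linear_iff
    (F : Type*) [Field F] (A : Type*) [Ring A] [Algebra F A] [FiniteDimensional F A]
    (σ : A ≃ₐ[F] A) (δ : A →ₗ[F] A)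
    (hder : ∀ a b : A, δ (a * b) = σ a * δ b + δ a * b)
    (S : Type*) [Ring S] [Algebra F S]
    (ι : A →ₐ[F] S) (X : S)
    (hX : ∀ a : A, X * ι a = ι (σ a) * X + ι (δ a))
    (c : S ≃ₗ[F] (ℕ →₀ A))
    (hc : ∀ s : S, s = (c s).sum fun n f => ι f * X ^ n)
    (ε : A →ₗ[F] F)
    (hker : ∀ f : A, (∀ u : A, ε (f * u) = 0) → f = 0)
    (α : S → {χ : S →ₗ[F] Polynomial F //
        ∀ (u : S) (r : Polynomial F), χ (u * Polynomial.aeval X r) = χ u * r})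
    (hbij : Function.Bijective α)
    (hadd : ∀ s t : S, (α (s + t)).1 = (α s).1 + (α t).1)
    (hmulS : ∀ s t u : S, (α (s * t)).1 u = (α s).1 (t * u))
    (hα1 : ∀ s : S, (α 1).1 s = (c s).sum fun n f => (Polynomial.monomial n (ε f) : Polynomial F)) :
    (∀ (r : Polynomial F) (s u : S),
        (α (Polynomial.aeval X r * s)).1 u = r * (α s).1 u) ↔
      ((∀ a : A, ε (σ a) = ε a) ∧ (∀ a : A, ε (δ a) = 0)) :=
  ore_alpha_left_linear_iff_general F A σ δ S ι X hX c hc ε α hmulS hα1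
end

section
/- Let p be prime, n > 1, τ the Frobenius automorphism of F_{p^n} (τ(x)=x^p), and α ∈ F_{p^n} a normal element (so {α, τ(α), ..., τ^{n-1}(α)} is an F_p-basis). Define the τ-derivation δ(b) = (τ(b) − b)·α/(τ(α) − α). Then every F_p-linear functional ε : F_{p^n} → F_p satisfying ε∘τ = ε and ε∘δ = 0 is zero. -/
/-! Since `δ α = α`, the hypothesis `ε ∘ δ = 0` gives `ε α = 0` (this needs `τ α ≠ α`, which holds
because the conjugates `τ^i α` form a basis and `n > 1`). Invariance under `τ` then kills every
conjugate `τ^i α`, and these span `F_{p^n}`. -/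

theorem linearIndependent_of_existsUnique_sum_smul {R M ι : Type*} [Ring R] [AddCommGroup M]
    [Module R M] [Fintype ι] {v : ι → M}
    (hv : ∀ x : M, ∃! g : ι → R, x = ∑ i, g i • v i) : LinearIndependent R v := by
  refine (Fintype.linearIndependent_iff (v := v)).2 fun g hg => ?_
  have hg_zero : g = 0 := (hv 0).unique hg.symm (by simp)
  simp [hg_zero]

theorem span_range_eq_top_of_forall_exists_sum_smul {R M ι : Type*} [Semiring R]
    [AddCommMonoid M] [Module R M] [Fintype ι] {v : ι → M}
    (hv : ∀ x : M, ∃ g : ι → R, x = ∑ i, g i • v i) : Submodule.span R (Set.range v) = ⊤ :=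
  Submodule.eq_top_iff'.2 fun x =>
    (Submodule.mem_span_range_iff_exists_fun R).2 <| (hv x).imp fun _ hg => hg.symm

theorem apply_pow_pow_eq_of_forall_apply_pow_eq {M β : Type*} [Monoid M] {f : M → β} {p : ℕ}
    (hf : ∀ b, f (b ^ p) = f b) (b : M) (i : ℕ) : f (b ^ p ^ i) = f b := by
  induction i with
  | zero => simp
  | succ k ih => rw [pow_succ, pow_mul, hf, ih]

/-- let `p` be prime, `n > 1`, `K = F_{p^n}` with Frobenius
automorphism `τ(x) = x^p`, and `α` a normal element (so `α, τ α, …, τ^{n-1} α`,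
i.e. `α^{p^i}` for `i < n`, form an `F_p`-basis of `K`).  For the `τ`-derivation
`δ(b) = (τ(b) - b) · α / (τ(α) - α)`, every `F_p`-linear functional `ε` with
`ε ∘ τ = ε` and `ε ∘ δ = 0` is zero. -/
theorem galois_field_no_compatible_functional
    (p n : ℕ) [Fact p.Prime] (hn : 1 < n)
    (α : GaloisField p n)
    (hα : ∀ x : GaloisField p n,
      ∃! g : Fin n → ZMod p, x = ∑ i : Fin n, g i • α ^ p ^ (i : ℕ))
    (ε : GaloisField p n →ₗ[ZMod p] ZMod p)
    (hσ : ∀ b : GaloisField p n, ε (b ^ p) = ε b)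
    (hδ : ∀ b : GaloisField p n, ε ((b ^ p - b) * α / (α ^ p - α)) = 0) :
    ε = 0 := by
  have hne : α ^ p - α ≠ 0 := by
    have h01 : (⟨1, hn⟩ : Fin n) ≠ ⟨0, by omega⟩ := by simp
    simpa [sub_eq_zero] using (linearIndependent_of_existsUnique_sum_smul hα).injective.ne h01
  have hεα : ε α = 0 := by simpa [mul_div_cancel_left₀ _ hne] using hδ α
  refine LinearMap.ext_on_range
    (span_range_eq_top_of_forall_exists_sum_smul fun x => (hα x).exists) fun i => ?_
  simpa [hεα] using apply_pow_pow_eq_of_forall_apply_pow_eq hσ α i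
end

section
/- Let C ⊆ B be a ring extension, σ an automorphism of B with σ(C) ⊆ C, and δ a σ-derivation of B with δ(C) ⊆ C. If ξ : B → C is a C-bimodule morphism with ξσ = σξ, ξδ = δξ and ξ(1) = 1, then the map ξ̂ : B[x;σ,δ] → C[x;σ,δ] defined by ξ̂(Σ b_i x^i) = Σ ξ(b_i) x^i is a C[x;σ,δ]-bimodule morphism with ξ̂(1) = 1; hence the extension C[x;σ,δ] ⊆ B[x;σ,δ] is split. -/
/-!
Both `ξ̂ (t * s) = t * ξ̂ s` and `ξ̂ (s * t) = ξ̂ s * t` define subsemirings of elements `t`, so it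
suffices to check them for the generators `X` and `ι a`, `a ∈ C`, of `C[x;σ,δ]`. Since both sides are
additive in `s`, these checks reduce to monomials `ι b * X ^ n`. Left multiplication by `X` is handled
by `ξσ = σξ` and `ξδ = δξ`, and left multiplication by `ι a` by left `C`-linearity of `ξ`. For right
multiplication by `ι a`, induction on `n` moves `ι a` past `X` using `X ι a = ι (σ a) X + ι (δ a)`.
This keeps the coefficients in `C` because `C` is stable under `σ` and `δ`.
-/

namespace AddMonoidHom

variable {R : Type*} [Semiring R] (f : R →+ R)

def leftLinearSubsemiring : Subsemiring R where
  carrier := {t | ∀ s, f (t * s) = t * f s}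
  mul_mem' {t u} ht hu s := by rw [mul_assoc, ht, hu, mul_assoc]
  one_mem' s := by simp
  add_mem' {t u} ht hu s := by rw [add_mul, map_add, ht, hu, add_mul]
  zero_mem' s := by simp

def rightLinearSubsemiring : Subsemiring R where
  carrier := {t | ∀ s, f (s * t) = f s * t}
  mul_mem' {t u} ht hu s := by rw [← mul_assoc, hu, ht, mul_assoc]
  one_mem' s := by simp
  add_mem' {t u} ht hu s := by rw [mul_add, map_add, ht, hu, mul_add]
  zero_mem' s := by simp

end AddMonoidHom

namespace OreCoefficients

variable {B SB : Type*} [Ring B] [Ring SB]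

/-- The coefficientwise extension `ξ̂` of `ξ`, read through the coefficient isomorphism `c`. -/
noncomputable def coeffMap (c : SB ≃+ (ℕ →₀ B)) (ξ : B →+ B) : SB →+ SB :=
  c.symm.toAddMonoidHom.comp ((Finsupp.mapRange.addMonoidHom ξ).comp c.toAddMonoidHom)

theorem coeff_coeffMap (c : SB ≃+ (ℕ →₀ B)) (ξ : B →+ B) (s : SB) :
    c (coeffMap c ξ s) = Finsupp.mapRange ξ ξ.map_zero (c s) := by
  simp [coeffMap, Finsupp.mapRange.addMonoidHom]

theorem coeffMap_eq_self (c : SB ≃+ (ℕ →₀ B)) {ξ : B →+ B} {C : Subring B}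
    (hξC : ∀ x ∈ C, ξ x = x) {t : SB} (ht : ∀ n, c t n ∈ C) : coeffMap c ξ t = t := by
  apply c.injective
  ext n
  rw [coeff_coeffMap, Finsupp.mapRange_apply, hξC _ (ht n)]

variable (ι : B →+* SB) (X : SB) (c : SB ≃+ (ℕ →₀ B))

theorem symm_single (hc : ∀ s : SB, s = (c s).sum fun n b => ι b * X ^ n) (n : ℕ) (b : B) :
    c.symm (Finsupp.single n b) = ι b * X ^ n := by
  rw [hc (c.symm _), c.apply_symm_apply, Finsupp.sum_single_index (by simp)]

theorem coeffMap_monomial (hc : ∀ s : SB, s = (c s).sum fun n b => ι b * X ^ n) (ξ : B →+ B)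
    (n : ℕ) (b : B) : coeffMap c ξ (ι b * X ^ n) = ι (ξ b) * X ^ n := by
  rw [← symm_single ι X c hc, ← symm_single ι X c hc, coeffMap]
  simp [Finsupp.mapRange.addMonoidHom]

theorem addMonoidHom_eq_of_monomial (hc : ∀ s : SB, s = (c s).sum fun n b => ι b * X ^ n)
    {M : Type*} [AddCommMonoid M] (f g : SB →+ M)
    (h : ∀ n b, f (ι b * X ^ n) = g (ι b * X ^ n)) (s : SB) : f s = g s := by
  rw [hc s, map_finsuppSum, map_finsuppSum]
  exact Finsupp.sum_congr fun n _ => h n _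

theorem mem_of_coeff_mem (hc : ∀ s : SB, s = (c s).sum fun n b => ι b * X ^ n)
    {C : Subring B} {S : Subsemiring SB} (hιS : ∀ a ∈ C, ι a ∈ S) (hXS : X ∈ S)
    {t : SB} (ht : ∀ n, c t n ∈ C) : t ∈ S := by
  rw [hc t]
  exact sum_mem fun n _ => mul_mem (hιS _ (ht n)) (pow_mem hXS n)

theorem coeffMap_one (hc : ∀ s : SB, s = (c s).sum fun n b => ι b * X ^ n) {ξ : B →+ B}
    (hξ1 : ξ 1 = 1) : coeffMap c ξ 1 = 1 := by
  simpa [hξ1] using coeffMap_monomial ι X c hc ξ 0 1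

theorem coeffMap_mul_X (hc : ∀ s : SB, s = (c s).sum fun n b => ι b * X ^ n) (ξ : B →+ B)
    (s : SB) : coeffMap c ξ (s * X) = coeffMap c ξ s * X := by
  refine addMonoidHom_eq_of_monomial ι X c hc ((coeffMap c ξ).comp (.mulRight X))
    ((AddMonoidHom.mulRight X).comp (coeffMap c ξ)) (fun n b => ?_) s
  simp only [AddMonoidHom.comp_apply, AddMonoidHom.coe_mulRight, mul_assoc, ← pow_succ,
    coeffMap_monomial ι X c hc]

theorem X_mem_leftLinearSubsemiring (hc : ∀ s : SB, s = (c s).sum fun n b => ι b * X ^ n)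
    {σ : B ≃+* B} {δ : B →+ B} (hX : ∀ b : B, X * ι b = ι (σ b) * X + ι (δ b)) {ξ : B →+ B}
    (hξσ : ∀ b : B, ξ (σ b) = σ (ξ b)) (hξδ : ∀ b : B, ξ (δ b) = δ (ξ b)) :
    X ∈ (coeffMap c ξ).leftLinearSubsemiring := by
  have expand (b : B) (n : ℕ) : X * (ι b * X ^ n) = ι (σ b) * X ^ (n + 1) + ι (δ b) * X ^ n := by
    rw [← mul_assoc, hX, add_mul, mul_assoc, ← pow_succ']
  refine addMonoidHom_eq_of_monomial ι X c hc ((coeffMap c ξ).comp (.mulLeft X))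
    ((AddMonoidHom.mulLeft X).comp (coeffMap c ξ)) fun n b => ?_
  simp only [AddMonoidHom.comp_apply, AddMonoidHom.coe_mulLeft, expand, map_add,
    coeffMap_monomial ι X c hc, hξσ, hξδ]

theorem ι_mem_leftLinearSubsemiring (hc : ∀ s : SB, s = (c s).sum fun n b => ι b * X ^ n)
    {C : Subring B} {ξ : B →+ B} (hξl : ∀ x ∈ C, ∀ b : B, ξ (x * b) = x * ξ b)
    {a : B} (ha : a ∈ C) : ι a ∈ (coeffMap c ξ).leftLinearSubsemiring := by
  refine addMonoidHom_eq_of_monomial ι X c hc ((coeffMap c ξ).comp (.mulLeft (ι a)))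
    ((AddMonoidHom.mulLeft (ι a)).comp (coeffMap c ξ)) fun n b => ?_
  simp only [AddMonoidHom.comp_apply, AddMonoidHom.coe_mulLeft, ← mul_assoc, ← map_mul,
    coeffMap_monomial ι X c hc, hξl a ha]

theorem coeffMap_monomial_mul_ι (hc : ∀ s : SB, s = (c s).sum fun n b => ι b * X ^ n)
    {σ : B ≃+* B} {δ : B →+ B} (hX : ∀ b : B, X * ι b = ι (σ b) * X + ι (δ b))
    {C : Subring B} (hσC : ∀ x ∈ C, σ x ∈ C) (hδC : ∀ x ∈ C, δ x ∈ C) {ξ : B →+ B}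
    (hξr : ∀ x ∈ C, ∀ b : B, ξ (b * x) = ξ b * x) (n : ℕ) :
    ∀ a ∈ C, ∀ b : B, coeffMap c ξ (ι b * X ^ n * ι a) = ι (ξ b) * X ^ n * ι a := by
  induction n with
  | zero =>
    intro a ha b
    simpa [← map_mul, hξr a ha] using coeffMap_monomial ι X c hc ξ 0 (b * a)
  | succ n ih =>
    intro a ha b
    have commute (b' : B) : ι b' * X ^ (n + 1) * ι a
        = ι b' * X ^ n * ι (σ a) * X + ι b' * X ^ n * ι (δ a) := by
      rw [pow_succ, ← mul_assoc, mul_assoc _ X, hX, mul_add, ← mul_assoc (ι b' * X ^ n)]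
    rw [commute, map_add, coeffMap_mul_X ι X c hc, ih _ (hσC a ha), ih _ (hδC a ha), commute]

theorem ι_mem_rightLinearSubsemiring (hc : ∀ s : SB, s = (c s).sum fun n b => ι b * X ^ n)
    {σ : B ≃+* B} {δ : B →+ B} (hX : ∀ b : B, X * ι b = ι (σ b) * X + ι (δ b))
    {C : Subring B} (hσC : ∀ x ∈ C, σ x ∈ C) (hδC : ∀ x ∈ C, δ x ∈ C) {ξ : B →+ B}
    (hξr : ∀ x ∈ C, ∀ b : B, ξ (b * x) = ξ b * x) {a : B} (ha : a ∈ C) :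
    ι a ∈ (coeffMap c ξ).rightLinearSubsemiring := by
  refine addMonoidHom_eq_of_monomial ι X c hc ((coeffMap c ξ).comp (.mulRight (ι a)))
    ((AddMonoidHom.mulRight (ι a)).comp (coeffMap c ξ)) fun n b => ?_
  simp only [AddMonoidHom.comp_apply, AddMonoidHom.coe_mulRight, coeffMap_monomial ι X c hc,
    coeffMap_monomial_mul_ι ι X c hc hX hσC hδC hξr n a ha]

end OreCoefficients

open OreCoefficients in
theorem ore_split_lifting_general
    (B : Type*) [Ring B] (C : Subring B)
    (σ : B ≃+* B) (hσC : ∀ x ∈ C, σ x ∈ C)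
    (δ : B →+ B)
    (hδC : ∀ x ∈ C, δ x ∈ C)
    (ξ : B →+ B)
    (hξl : ∀ x ∈ C, ∀ b : B, ξ (x * b) = x * ξ b)
    (hξr : ∀ x ∈ C, ∀ b : B, ξ (b * x) = ξ b * x)
    (hξσ : ∀ b : B, ξ (σ b) = σ (ξ b))
    (hξδ : ∀ b : B, ξ (δ b) = δ (ξ b))
    (hξ1 : ξ 1 = 1)
    (SB : Type*) [Ring SB] (ι : B →+* SB) (X : SB)
    (hX : ∀ b : B, X * ι b = ι (σ b) * X + ι (δ b))
    (c : SB ≃+ (ℕ →₀ B))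
    (hc : ∀ s : SB, s = (c s).sum fun n b => ι b * X ^ n) :
    ∃ Ξ : SB →+ SB,
      (∀ s : SB, c (Ξ s) = Finsupp.mapRange (⇑ξ) ξ.map_zero (c s)) ∧
      Ξ 1 = 1 ∧
      (∀ t s : SB, (∀ n : ℕ, c t n ∈ C) →
        Ξ (t * s) = t * Ξ s ∧ Ξ (s * t) = Ξ s * t) ∧
      (∀ t : SB, (∀ n : ℕ, c t n ∈ C) → Ξ t = t) := by
  have hX_right : X ∈ (coeffMap c ξ).rightLinearSubsemiring := coeffMap_mul_X ι X c hc ξ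
  have hξC : ∀ x ∈ C, ξ x = x := fun x hx => by simpa [hξ1] using hξl x hx 1
  refine ⟨coeffMap c ξ, coeff_coeffMap c ξ, coeffMap_one ι X c hc hξ1,
    fun t s ht => ⟨?_, ?_⟩, fun t ht => coeffMap_eq_self c hξC ht⟩
  · exact mem_of_coeff_mem ι X c hc (fun a ha => ι_mem_leftLinearSubsemiring ι X c hc hξl ha)
      (X_mem_leftLinearSubsemiring ι X c hc hX hξσ hξδ) ht s
  · exact mem_of_coeff_mem ι X c hc
      (fun a ha => ι_mem_rightLinearSubsemiring ι X c hc hX hσC hδC hξr ha) hX_right ht s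

/-- let `C ⊆ B` be a ring extension, `σ` an automorphism of `B`
preserving `C` and `δ` a `σ`-derivation preserving `C`.  Given a `C`-bimodule
morphism `ξ : B → C` with `ξσ = σξ`, `ξδ = δξ` and `ξ 1 = 1`, the coefficientwise
extension `ξ̂(∑ b_i x^i) = ∑ ξ(b_i) x^i` of `ξ` to the Ore extension
`B[x;σ,δ]` (presented via `ι`, `X` and the coefficient isomorphism `c`) is a
`C[x;σ,δ]`-bimodule morphism with `ξ̂ 1 = 1` which restricts to the identity on
`C[x;σ,δ]` (the subring of elements with all coefficients in `C`); hence the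
extension `C[x;σ,δ] ⊆ B[x;σ,δ]` is split. -/
theorem ore_split_lifting
    (B : Type*) [Ring B] (C : Subring B)
    (σ : B ≃+* B) (hσC : ∀ x ∈ C, σ x ∈ C)
    (δ : B →+ B) (hder : ∀ a b : B, δ (a * b) = σ a * δ b + δ a * b)
    (hδC : ∀ x ∈ C, δ x ∈ C)
    (ξ : B →+ B) (hξC : ∀ b : B, ξ b ∈ C)
    (hξl : ∀ x ∈ C, ∀ b : B, ξ (x * b) = x * ξ b)
    (hξr : ∀ x ∈ C, ∀ b : B, ξ (b * x) = ξ b * x)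
    (hξσ : ∀ b : B, ξ (σ b) = σ (ξ b))
    (hξδ : ∀ b : B, ξ (δ b) = δ (ξ b))
    (hξ1 : ξ 1 = 1)
    (SB : Type*) [Ring SB] (ι : B →+* SB) (X : SB)
    (hX : ∀ b : B, X * ι b = ι (σ b) * X + ι (δ b))
    (c : SB ≃+ (ℕ →₀ B))
    (hc : ∀ s : SB, s = (c s).sum fun n b => ι b * X ^ n) :
    ∃ Ξ : SB →+ SB,
      (∀ s : SB, c (Ξ s) = Finsupp.mapRange (⇑ξ) ξ.map_zero (c s)) ∧
      Ξ 1 = 1 ∧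
      (∀ t s : SB, (∀ n : ℕ, c t n ∈ C) →
        Ξ (t * s) = t * Ξ s ∧ Ξ (s * t) = Ξ s * t) ∧
      (∀ t : SB, (∀ n : ℕ, c t n ∈ C) → Ξ t = t) :=
  ore_split_lifting_general B C σ hσC δ hδC ξ hξl hξr hξσ hξδ hξ1 SB ι X hX c hc
end

section
/- If there exists an F-linear map ξ : A → F with ξ(1) = 1, ξ∘σ = ξ and ξ∘δ = 0, then the extension F[x] ⊆ A[x;σ,δ] is split, i.e. the inclusion F[x] → A[x;σ,δ] splits as an F[x]-bimodule morphism. -/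
/-!
Write every element of `S` uniquely as `∑ ι aₙ Xⁿ` and set `Ξ (∑ ι aₙ Xⁿ) = ∑ ξ(aₙ) xⁿ`.
This is `F`-linear, sends `1` to `1`, and commutes with right multiplication by `X` for
free. It also commutes with left multiplication by `X`: since
`X ι(a) Xⁿ = ι(σ a) Xⁿ⁺¹ + ι(δ a) Xⁿ`, the conditions `ξ ∘ σ = ξ` and `ξ ∘ δ = 0` give
`Ξ (X ι(a) Xⁿ) = ξ(a) xⁿ⁺¹`. Commuting with `F` and with `X` on either side, `Ξ` is an
`F[x]`-bimodule map.
-/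

open Polynomial

namespace LinearMap

variable {R S T : Type*} [CommRing R] [Ring S] [Ring T] [Algebra R S] [Algebra R T]

theorem map_aeval_mul_of_map_mul (Ξ : S →ₗ[R] T) {x : S} {y : T}
    (h : ∀ s, Ξ (x * s) = y * Ξ s) (r : R[X]) (s : S) :
    Ξ (aeval x r * s) = aeval y r * Ξ s := by
  induction r using Polynomial.induction_on generalizing s with
  | C a => simp only [aeval_C, ← Algebra.smul_def, map_smul]
  | add p q hp hq => simp only [map_add, add_mul, hp, hq]
  | monomial n a ih =>
    simp only [pow_succ, ← mul_assoc, map_mul, aeval_X] at ih ⊢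
    rw [mul_assoc, ih, h]
    simp only [mul_assoc]

theorem map_mul_aeval_of_map_mul (Ξ : S →ₗ[R] T) {x : S} {y : T}
    (h : ∀ s, Ξ (s * x) = Ξ s * y) (s : S) (r : R[X]) :
    Ξ (s * aeval x r) = Ξ s * aeval y r := by
  induction r using Polynomial.induction_on generalizing s with
  | C a => simp only [aeval_C, ← Algebra.commutes, ← Algebra.smul_def, map_smul]
  | add p q hp hq => simp only [map_add, mul_add, hp, hq]
  | monomial n a ih =>
    simp only [pow_succ, ← mul_assoc, map_mul, aeval_X] at ih ⊢
    rw [h, ih]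

end LinearMap

section OreRetraction

variable {F A S : Type*} [Field F] [Ring A] [Algebra F A] [Ring S] [Algebra F S]
  {ι : A →ₐ[F] S} {X : S} {c : S ≃ₗ[F] (ℕ →₀ A)}

noncomputable def oreRetraction (ξ : A →ₗ[F] F) (c : S ≃ₗ[F] (ℕ →₀ A)) : S →ₗ[F] F[X] :=
  (Finsupp.lsum F fun n => monomial n ∘ₗ ξ) ∘ₗ (c : S →ₗ[F] (ℕ →₀ A))

theorem LinearEquiv.symm_single_of_eq_sum (hc : ∀ s : S, s = (c s).sum fun n f => ι f * X ^ n)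
    (n : ℕ) (a : A) : c.symm (Finsupp.single n a) = ι a * X ^ n := by
  rw [hc (c.symm _), c.apply_symm_apply, Finsupp.sum_single_index (by simp)]

theorem oreRetraction_ι_mul_X_pow (ξ : A →ₗ[F] F)
    (hc : ∀ s : S, s = (c s).sum fun n f => ι f * X ^ n) (n : ℕ) (a : A) :
    oreRetraction ξ c (ι a * X ^ n) = monomial n (ξ a) := by
  rw [← LinearEquiv.symm_single_of_eq_sum hc]
  simp [oreRetraction]

theorem oreRetraction_one {ξ : A →ₗ[F] F} (hξ1 : ξ 1 = 1)
    (hc : ∀ s : S, s = (c s).sum fun n f => ι f * X ^ n) :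
    oreRetraction ξ c 1 = 1 := by
  simpa [hξ1] using oreRetraction_ι_mul_X_pow ξ hc 0 1

theorem oreRetraction_mul_X (ξ : A →ₗ[F] F)
    (hc : ∀ s : S, s = (c s).sum fun n f => ι f * X ^ n) (s : S) :
    oreRetraction ξ c (s * X) = oreRetraction ξ c s * Polynomial.X := by
  obtain ⟨f, rfl⟩ := c.symm.surjective s
  induction f using Finsupp.induction_linear with
  | zero => simp
  | add f g hf hg => simp only [map_add, add_mul, hf, hg]
  | single n a =>
    rw [LinearEquiv.symm_single_of_eq_sum hc, mul_assoc, ← pow_succ,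
      oreRetraction_ι_mul_X_pow ξ hc, oreRetraction_ι_mul_X_pow ξ hc, monomial_mul_X]

theorem oreRetraction_X_mul {σ : A ≃ₐ[F] A} {δ : A →ₗ[F] A}
    (hX : ∀ a : A, X * ι a = ι (σ a) * X + ι (δ a))
    (hc : ∀ s : S, s = (c s).sum fun n f => ι f * X ^ n)
    {ξ : A →ₗ[F] F} (hξσ : ∀ a : A, ξ (σ a) = ξ a) (hξδ : ∀ a : A, ξ (δ a) = 0) (s : S) :
    oreRetraction ξ c (X * s) = Polynomial.X * oreRetraction ξ c s := by
  obtain ⟨f, rfl⟩ := c.symm.surjective s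
  induction f using Finsupp.induction_linear with
  | zero => simp
  | add f g hf hg => simp only [map_add, mul_add, hf, hg]
  | single n a =>
    have hXa : X * (ι a * X ^ n) = ι (σ a) * X ^ (n + 1) + ι (δ a) * X ^ n := by
      rw [← mul_assoc, hX, add_mul, mul_assoc, ← pow_succ']
    rw [LinearEquiv.symm_single_of_eq_sum hc, hXa, map_add, oreRetraction_ι_mul_X_pow ξ hc,
      oreRetraction_ι_mul_X_pow ξ hc, oreRetraction_ι_mul_X_pow ξ hc, hξσ, hξδ, map_zero,
      add_zero, X_mul_monomial]

end OreRetraction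

theorem ore_split_general
    (F : Type*) [Field F] (A : Type*) [Ring A] [Algebra F A]
    (σ : A ≃ₐ[F] A) (δ : A →ₗ[F] A)
    (S : Type*) [Ring S] [Algebra F S]
    (ι : A →ₐ[F] S) (X : S)
    (hX : ∀ a : A, X * ι a = ι (σ a) * X + ι (δ a))
    (c : S ≃ₗ[F] (ℕ →₀ A))
    (hc : ∀ s : S, s = (c s).sum fun n f => ι f * X ^ n)
    (ξ : A →ₗ[F] F) (hξ1 : ξ 1 = 1)
    (hξσ : ∀ a : A, ξ (σ a) = ξ a)
    (hξδ : ∀ a : A, ξ (δ a) = 0) :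
    ∃ Ξ : S →+ Polynomial F,
      (∀ (r : Polynomial F) (s : S), Ξ (Polynomial.aeval X r * s) = r * Ξ s) ∧
      (∀ (s : S) (r : Polynomial F), Ξ (s * Polynomial.aeval X r) = Ξ s * r) ∧
      (∀ r : Polynomial F, Ξ (Polynomial.aeval X r) = r) := by
  set Ξ := oreRetraction ξ c
  have hleft (r : F[X]) (s : S) : Ξ (aeval X r * s) = r * Ξ s := by
    simpa using Ξ.map_aeval_mul_of_map_mul (oreRetraction_X_mul hX hc hξσ hξδ) r s
  have hright (s : S) (r : F[X]) : Ξ (s * aeval X r) = Ξ s * r := by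
    simpa using Ξ.map_mul_aeval_of_map_mul (oreRetraction_mul_X ξ hc) s r
  refine ⟨Ξ.toAddMonoidHom, hleft, hright, fun r => ?_⟩
  simpa [Ξ, oreRetraction_one hξ1 hc] using hleft r 1

/-- if there is an `F`-linear map `ξ : A → F` with `ξ 1 = 1`,
`ξ ∘ σ = ξ` and `ξ ∘ δ = 0`, then the extension `F[x] ⊆ A[x;σ,δ]` is split: the
inclusion `r ↦ r(X)` of `F[x]` into `S` admits an additive retraction
`Ξ : S → F[x]` which is an `F[x]`-bimodule morphism. -/
theorem ore_split
    (F : Type*) [Field F] (A : Type*) [Ring A] [Algebra F A] [FiniteDimensional F A]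
    (σ : A ≃ₐ[F] A) (δ : A →ₗ[F] A)
    (hder : ∀ a b : A, δ (a * b) = σ a * δ b + δ a * b)
    (S : Type*) [Ring S] [Algebra F S]
    (ι : A →ₐ[F] S) (X : S)
    (hX : ∀ a : A, X * ι a = ι (σ a) * X + ι (δ a))
    (c : S ≃ₗ[F] (ℕ →₀ A))
    (hc : ∀ s : S, s = (c s).sum fun n f => ι f * X ^ n)
    (ξ : A →ₗ[F] F) (hξ1 : ξ 1 = 1)
    (hξσ : ∀ a : A, ξ (σ a) = ξ a)
    (hξδ : ∀ a : A, ξ (δ a) = 0) :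
    ∃ Ξ : S →+ Polynomial F,
      (∀ (r : Polynomial F) (s : S), Ξ (Polynomial.aeval X r * s) = r * Ξ s) ∧
      (∀ (s : S) (r : Polynomial F), Ξ (s * Polynomial.aeval X r) = Ξ s * r) ∧
      (∀ r : Polynomial F, Ξ (Polynomial.aeval X r) = r) :=
  ore_split_general F A σ δ S ι X hX c hc ξ hξ1 hξσ hξδ
end

section
/- If C ⊆ B is a separable ring extension admitting a separability element p ∈ B⊗_C B with σ⊗(p) = p and δ⊗(p) = 0, then C[x;σ,δ] ⊆ B[x;σ,δ] is separable, where σ⊗(b₁⊗b₂) = σ(b₁)⊗σ(b₂) and δ⊗(b₁⊗b₂) = σ(b₁)⊗δ(b₂) + δ(b₁)⊗b₂. -/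
/-!
The image `q = j p` of the separability element in `B[x;σ,δ] ⊗ B[x;σ,δ]` still satisfies
`μ' q = 1`, and it commutes with `ι B` because `p` centralizes `B`. Since the coefficients
of `X` lie in `C`, `X` passes through the tensor sign, which gives
`l' X ∘ j = r' X ∘ j ∘ σ⊗ + j ∘ δ⊗`; at `p` the hypotheses `σ⊗ p = p`, `δ⊗ p = 0` make
`q` commute with `X`. The elements commuting with `q` form a subring, and `ι B` together
with `X` generate `B[x;σ,δ]`.
-/

theorem addMonoidHom_ext_of_closure_eq_top {R M N : Type*} [AddZeroClass R] [AddCommGroup M]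
    [AddCommGroup N]
    {tp : R →+ R →+ M} (hspan : AddSubgroup.closure {t : M | ∃ u v, t = tp u v} = ⊤)
    {F G : M →+ N} (h : ∀ u v, F (tp u v) = G (tp u v)) : F = G :=
  AddMonoidHom.eq_of_eqOn_dense hspan (by rintro t ⟨u, v, rfl⟩; exact h u v)

/-- `M` is generated by the pure tensors `tp u v`, on which `l s` and `r s` act as left and
right multiplication by `s`. -/
structure IsTensorBimodule {R M : Type*} [Ring R] [AddCommGroup M]
    (tp : R →+ R →+ M) (l r : R → M →+ M) : Prop where
  closure_eq_top : AddSubgroup.closure {t : M | ∃ u v, t = tp u v} = ⊤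
  left_tp : ∀ s u v, l s (tp u v) = tp (s * u) v
  right_tp : ∀ s u v, r s (tp u v) = tp u (v * s)

namespace IsTensorBimodule

variable {R M : Type*} [Ring R] [AddCommGroup M] {tp : R →+ R →+ M} {l r : R → M →+ M}

theorem ext (h : IsTensorBimodule tp l r) {F G : M →+ M}
    (hFG : ∀ u v, F (tp u v) = G (tp u v)) : F = G :=
  addMonoidHom_ext_of_closure_eq_top h.closure_eq_top hFG

theorem left_zero (h : IsTensorBimodule tp l r) : l 0 = 0 :=
  h.ext fun u v => by simp [h.left_tp]

theorem right_zero (h : IsTensorBimodule tp l r) : r 0 = 0 :=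
  h.ext fun u v => by simp [h.right_tp]

theorem left_one (h : IsTensorBimodule tp l r) : l 1 = AddMonoidHom.id M :=
  h.ext fun u v => by simp [h.left_tp]

theorem right_one (h : IsTensorBimodule tp l r) : r 1 = AddMonoidHom.id M :=
  h.ext fun u v => by simp [h.right_tp]

theorem left_add (h : IsTensorBimodule tp l r) (a b : R) : l (a + b) = l a + l b :=
  h.ext fun u v => by simp [h.left_tp, add_mul]

theorem right_add (h : IsTensorBimodule tp l r) (a b : R) : r (a + b) = r a + r b :=
  h.ext fun u v => by simp [h.right_tp, mul_add]

theorem left_neg (h : IsTensorBimodule tp l r) (a : R) : l (-a) = -l a :=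
  h.ext fun u v => by simp [h.left_tp]

theorem right_neg (h : IsTensorBimodule tp l r) (a : R) : r (-a) = -r a :=
  h.ext fun u v => by simp [h.right_tp]

theorem left_mul (h : IsTensorBimodule tp l r) (a b : R) : l (a * b) = (l a).comp (l b) :=
  h.ext fun u v => by simp [h.left_tp, mul_assoc]

theorem right_mul (h : IsTensorBimodule tp l r) (a b : R) : r (a * b) = (r b).comp (r a) :=
  h.ext fun u v => by simp [h.right_tp, mul_assoc]

theorem left_comp_right (h : IsTensorBimodule tp l r) (a b : R) :
    (l a).comp (r b) = (r b).comp (l a) :=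
  h.ext fun u v => by simp [h.left_tp, h.right_tp]

def commutant (h : IsTensorBimodule tp l r) (q : M) : Subring R where
  carrier := {s | l s q = r s q}
  zero_mem' := by simp [h.left_zero, h.right_zero]
  one_mem' := by simp [h.left_one, h.right_one]
  add_mem' {a b} ha hb := by
    simp only [Set.mem_ofPred_eq, h.left_add, h.right_add, AddMonoidHom.add_apply] at ha hb ⊢
    rw [ha, hb]
  neg_mem' {a} ha := by
    simp only [Set.mem_ofPred_eq, h.left_neg, h.right_neg, AddMonoidHom.neg_apply] at ha ⊢
    rw [ha]
  mul_mem' {a b} ha hb := by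
    simp only [Set.mem_ofPred_eq] at ha hb ⊢
    calc l (a * b) q = l a (l b q) := by rw [h.left_mul]; rfl
      _ = r b (l a q) := by rw [hb, ← AddMonoidHom.comp_apply, h.left_comp_right]; rfl
      _ = r (a * b) q := by rw [ha, h.right_mul]; rfl

theorem mem_commutant (h : IsTensorBimodule tp l r) {q : M} {s : R} :
    s ∈ h.commutant q ↔ l s q = r s q :=
  Iff.rfl

end IsTensorBimodule

section OreExtension

variable {B SB : Type*} [Ring B] [Ring SB] {ι : B →+* SB} {X : SB}

theorem subring_eq_top_of_forall_eq_sum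
    (hsum : ∀ s : SB, ∃ d : ℕ →₀ B, s = d.sum fun n b => ι b * X ^ n)
    (S : Subring SB) (hι : ∀ b, ι b ∈ S) (hX : X ∈ S) : S = ⊤ := by
  refine eq_top_iff.2 fun s _ => ?_
  obtain ⟨d, rfl⟩ := hsum s
  exact Subring.sum_mem _ fun n _ => mul_mem (hι _) (pow_mem hX n)

theorem coeff_X_eq {c : SB ≃+ (ℕ →₀ B)} (hc : ∀ s : SB, s = (c s).sum fun n b => ι b * X ^ n) :
    c X = Finsupp.single 1 1 := by
  obtain ⟨s, hs⟩ := c.surjective (Finsupp.single 1 1)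
  have hsX : s = X := by
    rw [hc s, hs, Finsupp.sum_single_index (by simp), map_one, one_mul, pow_one]
  rw [← hsX, hs]

theorem coeff_X_mem {c : SB ≃+ (ℕ →₀ B)} (hc : ∀ s : SB, s = (c s).sum fun n b => ι b * X ^ n)
    (C : Subring B) (n : ℕ) : c X n ∈ C := by
  rw [coeff_X_eq hc, Finsupp.single_apply]
  split
  · exact C.one_mem
  · exact C.zero_mem

end OreExtension

section BaseChange

variable {B SB T T' : Type*} [Ring B] [Ring SB] [AddCommGroup T] [AddCommGroup T']
  {tp : B →+ B →+ T} {tp' : SB →+ SB →+ T'} {l r : B → T →+ T} {l' r' : SB → T' →+ T'}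
  {ι : B →+* SB} {j : T →+ T'}

theorem comp_left_eq (hT : IsTensorBimodule tp l r) (hT' : IsTensorBimodule tp' l' r')
    (hj : ∀ u v, j (tp u v) = tp' (ι u) (ι v)) (b : B) :
    j.comp (l b) = (l' (ι b)).comp j :=
  addMonoidHom_ext_of_closure_eq_top hT.closure_eq_top fun u v => by
    simp [hT.left_tp, hT'.left_tp, hj]

theorem comp_right_eq (hT : IsTensorBimodule tp l r) (hT' : IsTensorBimodule tp' l' r')
    (hj : ∀ u v, j (tp u v) = tp' (ι u) (ι v)) (b : B) :
    j.comp (r b) = (r' (ι b)).comp j :=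
  addMonoidHom_ext_of_closure_eq_top hT.closure_eq_top fun u v => by
    simp [hT.right_tp, hT'.right_tp, hj]

theorem mulMap_comp_eq (hspan : AddSubgroup.closure {t : T | ∃ u v, t = tp u v} = ⊤)
    {μ : T →+ B} (hμ : ∀ u v, μ (tp u v) = u * v)
    {μ' : T' →+ SB} (hμ' : ∀ u v, μ' (tp' u v) = u * v)
    (hj : ∀ u v, j (tp u v) = tp' (ι u) (ι v)) :
    μ'.comp j = (ι : B →+ SB).comp μ :=
  addMonoidHom_ext_of_closure_eq_top hspan fun u v => by simp [hμ, hμ', hj]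

theorem left_X_comp_eq (hspan : AddSubgroup.closure {t : T | ∃ u v, t = tp u v} = ⊤)
    (hT' : IsTensorBimodule tp' l' r') {σ : B ≃+* B} {δ : B →+ B} {X : SB}
    (hX : ∀ b, X * ι b = ι (σ b) * X + ι (δ b))
    (hXbal : ∀ s s', tp' (s * X) s' = tp' s (X * s'))
    (hj : ∀ u v, j (tp u v) = tp' (ι u) (ι v)) {σT δT : T →+ T}
    (hσT : ∀ u v, σT (tp u v) = tp (σ u) (σ v))
    (hδT : ∀ u v, δT (tp u v) = tp (σ u) (δ v) + tp (δ u) v) :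
    (l' X).comp j = (r' X).comp (j.comp σT) + j.comp δT :=
  addMonoidHom_ext_of_closure_eq_top hspan fun u v => by
    simp only [AddMonoidHom.comp_apply, AddMonoidHom.add_apply, hσT, hδT, map_add, hj,
      hT'.left_tp, hT'.right_tp, hX, hXbal]
    abel

end BaseChange

theorem ore_separable_lifting_general
    (B : Type*) [Ring B] (C : Subring B)
    (σ : B ≃+* B)
    (δ : B →+ B)
    (SB : Type*) [Ring SB] (ι : B →+* SB) (X : SB)
    (hX : ∀ b : B, X * ι b = ι (σ b) * X + ι (δ b))
    (c : SB ≃+ (ℕ →₀ B))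
    (hc : ∀ s : SB, s = (c s).sum fun n b => ι b * X ^ n)
    -- the tensor product T = B ⊗_C B
    (T : Type*) [AddCommGroup T] (tp : B →+ B →+ T)
    (hTspan : AddSubgroup.closure {t : T | ∃ b b', t = tp b b'} = ⊤)
    (l r : B → T →+ T)
    (hl : ∀ b u v : B, l b (tp u v) = tp (b * u) v)
    (hr : ∀ b u v : B, r b (tp u v) = tp u (v * b))
    (μ : T →+ B) (hμ : ∀ u v : B, μ (tp u v) = u * v)
    (σT δT : T →+ T)
    (hσT : ∀ u v : B, σT (tp u v) = tp (σ u) (σ v))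
    (hδT : ∀ u v : B, δT (tp u v) = tp (σ u) (δ v) + tp (δ u) v)
    -- the tensor product T' = SB ⊗_{SC} SB
    (T' : Type*) [AddCommGroup T'] (tp' : SB →+ SB →+ T')
    (hbal' : ∀ (s s' w : SB), (∀ n : ℕ, c w n ∈ C) → tp' (s * w) s' = tp' s (w * s'))
    (hT'span : AddSubgroup.closure {t : T' | ∃ s s', t = tp' s s'} = ⊤)
    (l' r' : SB → T' →+ T')
    (hl' : ∀ s u v : SB, l' s (tp' u v) = tp' (s * u) v)
    (hr' : ∀ s u v : SB, r' s (tp' u v) = tp' u (v * s))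
    (μ' : T' →+ SB) (hμ' : ∀ u v : SB, μ' (tp' u v) = u * v)
    (j : T →+ T') (hj : ∀ u v : B, j (tp u v) = tp' (ι u) (ι v))
    -- the separability element
    (p : T) (hp : ∀ b : B, l b p = r b p) (hp1 : μ p = 1)
    (hpσ : σT p = p) (hpδ : δT p = 0) :
    ∃ q : T', (∀ s : SB, l' s q = r' s q) ∧ μ' q = 1 := by
  have hT : IsTensorBimodule tp l r := ⟨hTspan, hl, hr⟩
  have hT' : IsTensorBimodule tp' l' r' := ⟨hT'span, hl', hr'⟩
  have hι (b : B) : ι b ∈ hT'.commutant (j p) :=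
    calc l' (ι b) (j p) = j (l b p) := (DFunLike.congr_fun (comp_left_eq hT hT' hj b) p).symm
      _ = j (r b p) := by rw [hp b]
      _ = r' (ι b) (j p) := DFunLike.congr_fun (comp_right_eq hT hT' hj b) p
  have hXmem : X ∈ hT'.commutant (j p) := by
    have hXbal (s s' : SB) := hbal' s s' X (coeff_X_mem hc C)
    rw [hT'.mem_commutant, ← AddMonoidHom.comp_apply,
      left_X_comp_eq hTspan hT' hX hXbal hj hσT hδT]
    simp [hpσ, hpδ]
  have htop := subring_eq_top_of_forall_eq_sum (fun s => ⟨c s, hc s⟩) _ hι hXmem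
  refine ⟨j p, fun s => hT'.mem_commutant.1 (htop ▸ Subring.mem_top s), ?_⟩
  rw [← AddMonoidHom.comp_apply, mulMap_comp_eq hTspan hμ hμ' hj, AddMonoidHom.comp_apply, hp1,
    AddMonoidHom.coe_coe, map_one]

/-- if `C ⊆ B` is a separable ring extension with a separability
element `p ∈ B ⊗_C B` satisfying `σ⊗(p) = p` and `δ⊗(p) = 0`, then
`C[x;σ,δ] ⊆ B[x;σ,δ]` is separable.  The tensor products `T = B ⊗_C B` and
`T' = SB ⊗_{SC} SB` (where `SB = B[x;σ,δ]` and `SC = C[x;σ,δ]` is the subring of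
elements all of whose coefficients lie in `C`) are axiomatized by biadditive
balanced maps `tp`, `tp'` generating them, together with the left/right
multiplication actions `l, r, l', r'`, the multiplication maps `μ, μ'`, the maps
`σ⊗ = σT`, `δ⊗ = δT` on `T`, and the canonical map `j : T → T'` induced by `ι`.
A separability element for the Ore extension is produced from `p`. -/
theorem ore_separable_lifting
    (B : Type*) [Ring B] (C : Subring B)
    (σ : B ≃+* B) (hσC : ∀ x ∈ C, σ x ∈ C)
    (δ : B →+ B) (hder : ∀ a b : B, δ (a * b) = σ a * δ b + δ a * b)
    (hδC : ∀ x ∈ C, δ x ∈ C)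
    (SB : Type*) [Ring SB] (ι : B →+* SB) (X : SB)
    (hX : ∀ b : B, X * ι b = ι (σ b) * X + ι (δ b))
    (c : SB ≃+ (ℕ →₀ B))
    (hc : ∀ s : SB, s = (c s).sum fun n b => ι b * X ^ n)
    -- the tensor product T = B ⊗_C B
    (T : Type*) [AddCommGroup T] (tp : B →+ B →+ T)
    (hbal : ∀ (b b' : B), ∀ x ∈ C, tp (b * x) b' = tp b (x * b'))
    (hTspan : AddSubgroup.closure {t : T | ∃ b b', t = tp b b'} = ⊤)
    (l r : B → T →+ T)
    (hl : ∀ b u v : B, l b (tp u v) = tp (b * u) v)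
    (hr : ∀ b u v : B, r b (tp u v) = tp u (v * b))
    (μ : T →+ B) (hμ : ∀ u v : B, μ (tp u v) = u * v)
    (σT δT : T →+ T)
    (hσT : ∀ u v : B, σT (tp u v) = tp (σ u) (σ v))
    (hδT : ∀ u v : B, δT (tp u v) = tp (σ u) (δ v) + tp (δ u) v)
    -- the tensor product T' = SB ⊗_{SC} SB
    (T' : Type*) [AddCommGroup T'] (tp' : SB →+ SB →+ T')
    (hbal' : ∀ (s s' w : SB), (∀ n : ℕ, c w n ∈ C) → tp' (s * w) s' = tp' s (w * s'))
    (hT'span : AddSubgroup.closure {t : T' | ∃ s s', t = tp' s s'} = ⊤)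
    (l' r' : SB → T' →+ T')
    (hl' : ∀ s u v : SB, l' s (tp' u v) = tp' (s * u) v)
    (hr' : ∀ s u v : SB, r' s (tp' u v) = tp' u (v * s))
    (μ' : T' →+ SB) (hμ' : ∀ u v : SB, μ' (tp' u v) = u * v)
    (j : T →+ T') (hj : ∀ u v : B, j (tp u v) = tp' (ι u) (ι v))
    -- the separability element
    (p : T) (hp : ∀ b : B, l b p = r b p) (hp1 : μ p = 1)
    (hpσ : σT p = p) (hpδ : δT p = 0) :
    ∃ q : T', (∀ s : SB, l' s q = r' s q) ∧ μ' q = 1 :=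
  ore_separable_lifting_general B C σ δ SB ι X hX c hc T tp hTspan l r hl hr μ hμ σT δT hσT hδT T'
    tp' hbal' hT'span l' r' hl' hr' μ' hμ' j hj p hp hp1 hpσ hpδ
end

section
/- Let A = M₂(F₈) where F₈ = F₂(a) with a³ + a² + 1 = 0, let σ be the entrywise Frobenius automorphism X ↦ (x_{ij}²), and δ(X) = MX − σ(X)M where M = diag(0, a). Then every F₂-linear map ε : A → F₂ satisfying ε∘σ = ε and ε∘δ = 0 vanishes on all matrices with zero first column; in particular the kernel of any such ε contains the nonzero left ideal J = {(0 c₂; 0 c₃) : c₂,c₃ ∈ F₈}, so no such ε is a Frobenius functional. -/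
/-!
On the matrix units `E_ij(x)` the σ-derivation `δ(Y) = M Y - σ(Y) M`, `M = E₁₁(a)`, is explicit:
`δ(E₀₁(c)) = E₀₁(c² a)`, `δ(E₁₀(c)) = E₁₀(a c)` and `δ(E₁₁(c)) = E₁₁(a c - c² a)`. Since `a ≠ 0` and
squaring is onto `F₈`, `ε ∘ δ = 0` kills `E₀₁(x)` and `E₁₀(x)` for every `x`. On the diagonal,
`φ(x) = ε(E₁₁(x))` is additive and `σ`-invariant, so `φ(x) = φ(x + x² + x⁴)`; the trace `x + x² + x⁴`
lies in `F₂`, and `φ(1) = φ(a·a - a²·a) = 0` because `a² - a³ = 1`. Hence `ε` vanishes on the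
second column, a nonzero left ideal, and on the second row, a nonzero right ideal.
-/

open Matrix

section CharTwo

variable {K : Type*} [Field K] [CharP K 2]

theorem isIdempotentElem_add_sq_add_pow_four {x : K} (hx : x ^ 8 = x) :
    IsIdempotentElem (x + x ^ 2 + x ^ 4) := by
  have h2 : (2 : K) = 0 := CharTwo.two_eq_zero
  unfold IsIdempotentElem
  linear_combination hx + (x ^ 3 + x ^ 5 + x ^ 6) * h2

theorem AddMonoidHom.apply_eq_zero_of_map_sq_of_map_one {G : Type*} [AddMonoid G]
    (hK : ∀ x : K, x ^ 8 = x) (φ : K →+ G) (hsq : ∀ c, φ (c ^ 2) = φ c) (h1 : φ 1 = 0)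
    (x : K) : φ x = 0 := by
  have hφ2 : φ x + φ x = 0 := by rw [← map_add, CharTwo.add_self_eq_zero, map_zero]
  have htrace : φ (x + x ^ 2 + x ^ 4) = φ x := by
    have h4 : φ (x ^ 4) = φ x := by rw [show x ^ 4 = (x ^ 2) ^ 2 by ring, hsq, hsq]
    rw [map_add, map_add, hsq, h4, hφ2, zero_add]
  rcases IsIdempotentElem.iff_eq_zero_or_one.mp (isIdempotentElem_add_sq_add_pow_four (hK x))
    with h | h
  · rw [← htrace, h, map_zero]
  · rw [← htrace, h, h1]

end CharTwo

theorem GaloisField.pow_eight (x : GaloisField 2 3) : x ^ 8 = x := by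
  have : Fintype (GaloisField 2 3) := Fintype.ofFinite _
  have hcard : Fintype.card (GaloisField 2 3) = 8 := by
    rw [← Nat.card_eq_fintype_card, GaloisField.card 2 3 (by norm_num)]
    norm_num
  simpa [hcard] using FiniteField.pow_card x

namespace Matrix

theorem map_single_mul_self {m n α : Type*} [DecidableEq m] [DecidableEq n] [MulZeroClass α]
    (i : m) (j : n) (c : α) :
    (single i j c).map (fun x => x * x) = single i j (c * c) := by
  ext i' j'
  by_cases h : i = i' ∧ j = j' <;> simp [single, h]

theorem map_eq_zero_of_forall_single {m n α G F : Type*} [Fintype m] [Fintype n] [DecidableEq m]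
    [DecidableEq n] [AddCommMonoid α] [AddCommMonoid G] [FunLike F (Matrix m n α) G]
    [AddMonoidHomClass F (Matrix m n α) G] (ε : F) {Y : Matrix m n α}
    (h : ∀ i j, ε (single i j (Y i j)) = 0) : ε Y = 0 := by
  rw [matrix_eq_sum_single Y, map_sum]
  exact Finset.sum_eq_zero fun i _ => by
    rw [map_sum]
    exact Finset.sum_eq_zero fun j _ => h i j

section SigmaDerivation

variable {n K G F : Type*} [Fintype n] [DecidableEq n] [Field K] [FunLike F (Matrix n n K) G]
  (ε : F) {a : K}

theorem map_single_col_eq_zero [AddGroup G] [AddMonoidHomClass F (Matrix n n K) G]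
    [CharP K 2] [PerfectRing K 2] {i j : n} (hij : i ≠ j)
    (hδ : ∀ Y : Matrix n n K, ε (single j j a * Y - (Y.map fun x => x * x) * single j j a) = 0)
    (ha : a ≠ 0) (x : K) : ε (single i j x) = 0 := by
  obtain ⟨c, hc⟩ := surjective_frobenius K 2 (x * a⁻¹)
  have hx : c * c * a = x := by rw [← sq, ← frobenius_def, hc, inv_mul_cancel_right₀ ha]
  have h := hδ (single i j c)
  rwa [map_single_mul_self, single_mul_single_of_ne (h := hij.symm), single_mul_single_same,
    zero_sub, map_neg, neg_eq_zero, hx] at h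

theorem map_single_row_eq_zero [Zero G] {i j : n} (hij : i ≠ j)
    (hδ : ∀ Y : Matrix n n K, ε (single j j a * Y - (Y.map fun x => x * x) * single j j a) = 0)
    (ha : a ≠ 0) (x : K) : ε (single j i x) = 0 := by
  have h := hδ (single j i (a⁻¹ * x))
  rwa [map_single_mul_self, single_mul_single_same, single_mul_single_of_ne (h := hij),
    sub_zero, mul_inv_cancel_left₀ ha] at h

theorem map_single_diag_eq_zero [AddMonoid G] [AddMonoidHomClass F (Matrix n n K) G]
    [CharP K 2] (hK : ∀ x : K, x ^ 8 = x) (ha : a ^ 3 + a ^ 2 + 1 = 0)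
    (hσ : ∀ Y : Matrix n n K, ε (Y.map fun x => x * x) = ε Y) {j : n}
    (hδ : ∀ Y : Matrix n n K, ε (single j j a * Y - (Y.map fun x => x * x) * single j j a) = 0)
    (x : K) : ε (single j j x) = 0 := by
  let φ : K →+ G := (ε : Matrix n n K →+ G).comp (singleAddMonoidHom j j)
  refine φ.apply_eq_zero_of_map_sq_of_map_one hK (fun c => ?_) ?_ x
  · simpa [φ, sq, map_single_mul_self] using hσ (single j j c)
  · have hunit : a * a - a * a * a = 1 := by
      linear_combination -ha + a ^ 2 * (CharTwo.two_eq_zero : (2 : K) = 0)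
    have hsub : single j j (a * a) - single j j (a * a * a) = single j j 1 := by
      rw [← hunit]
      exact (map_sub (singleAddMonoidHom j j : K →+ Matrix n n K) _ _).symm
    have h := hδ (single j j a)
    rwa [map_single_mul_self, single_mul_single_same, single_mul_single_same, hsub] at h

end SigmaDerivation

end Matrix

/-- let `A = M₂(F₈)` with `F₈ = F₂(a)`, `a³ + a² + 1 = 0`, `σ` the
entrywise Frobenius automorphism `X ↦ (x_{ij}²)` and `δ(X) = M X - σ(X) M` with
`M = diag(0, a)`.  Every `F₂`-linear `ε : A → F₂` with `ε ∘ σ = ε` and `ε ∘ δ = 0`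
vanishes on all matrices with zero first column; in particular the kernel of `ε`
contains the nonzero left ideal `J` of such matrices, and no such `ε` is a
Frobenius functional (its kernel contains a nonzero right ideal as well). -/
theorem matrix_no_compatible_frobenius_functional
    (a : GaloisField 2 3) (ha : a ^ 3 + a ^ 2 + 1 = 0)
    (ε : Matrix (Fin 2) (Fin 2) (GaloisField 2 3) →ₗ[ZMod 2] ZMod 2)
    (hεσ : ∀ Y : Matrix (Fin 2) (Fin 2) (GaloisField 2 3),
      ε (Y.map fun x => x * x) = ε Y)
    (hεδ : ∀ Y : Matrix (Fin 2) (Fin 2) (GaloisField 2 3),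
      ε (Matrix.single 1 1 a * Y -
          (Y.map fun x => x * x) * Matrix.single 1 1 a) = 0) :
    (∀ Y : Matrix (Fin 2) (Fin 2) (GaloisField 2 3),
      (∀ i, Y i 0 = 0) → ε Y = 0) ∧
    (∀ Y : Matrix (Fin 2) (Fin 2) (GaloisField 2 3),
      (∀ i, Y i 0 = 0) → ∀ u, ε (u * Y) = 0) ∧
    ¬ (∀ f : Matrix (Fin 2) (Fin 2) (GaloisField 2 3),
        (∀ u, ε (f * u) = 0) → f = 0) := by
  have ha0 : a ≠ 0 := by
    rintro rfl
    norm_num at ha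
  have h01 := map_single_col_eq_zero ε zero_ne_one hεδ ha0
  have h10 := map_single_row_eq_zero ε zero_ne_one hεδ ha0
  have h11 := map_single_diag_eq_zero ε GaloisField.pow_eight ha hεσ hεδ
  have hcol : ∀ Y : Matrix (Fin 2) (Fin 2) (GaloisField 2 3), (∀ i, Y i 0 = 0) → ε Y = 0 :=
    fun Y hY => map_eq_zero_of_forall_single ε fun i j => by
      fin_cases i <;> fin_cases j <;> simp [hY, h01, h11]
  refine ⟨hcol, fun Y hY u => hcol _ fun i => by simp [mul_apply, hY], fun hnondeg => ?_⟩
  have hrow := hnondeg (single 1 0 1) fun u => map_eq_zero_of_forall_single ε fun i j => by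
    fin_cases i <;> fin_cases j <;> simp [h10, h11]
  simpa using congrFun₂ hrow 1 0
end

section
/- With A = M₂(F₈), σ the entrywise Frobenius automorphism, and δ(X) = MX − σ(X)M for M = diag(0,a), the F₂-linear map ξ : A → F₂ determined on the basis {a^{2^i} e_j} by ξ(a^{2^i} e₀) = 1 and ξ(a^{2^i} e_j) = 0 for j = 1,2,3 satisfies ξ(1) = 1, ξ∘σ = ξ, and ξ∘δ = 0. -/
/-!
The functionals `x ↦ ξ (Matrix.single i j x)` on `F₈` are `F₂`-linear, and `a` has degree
`3 = [F₈ : F₂]` (it is not in `F₂`), so such a functional is determined by its values on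
`1, a, a²`, or equivalently on `a, a², a⁴` since `a + a² + a⁴ = 1`. Hence `ξ` vanishes off the
`(0,0)` slot and `ξ Y = φ (Y 0 0)` with `φ = ξ ∘ single 0 0`, and `φ ∘ Frob = φ` because both
sides agree on `1, a, a²`. The first row and column of `M` vanish, so `δ Y` has `(0,0)` entry `0`.
-/

open Module

theorem minpoly.natDegree_eq_finrank_of_prime {K L : Type*} [Field K] [Field L] [Algebra K L]
    [FiniteDimensional K L] (hL : (finrank K L).Prime) {x : L}
    (hx : x ∉ (algebraMap K L).range) : (minpoly K x).natDegree = finrank K L :=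
  ((hL.eq_one_or_self_of_dvd _ (minpoly.degree_dvd (.of_finite K x))).resolve_left
    (mt minpoly.natDegree_eq_one_iff.mp hx))

theorem LinearMap.ext_pow_of_natDegree_minpoly_eq_finrank {K L M : Type*} [Field K] [Field L]
    [Algebra K L] [FiniteDimensional K L] [AddCommMonoid M] [Module K M] {x : L}
    (hx : (minpoly K x).natDegree = finrank K L) {f g : L →ₗ[K] M}
    (h : ∀ i < finrank K L, f (x ^ i) = g (x ^ i)) : f = g := by
  have hcard : Fintype.card (Fin (minpoly K x).natDegree) = finrank K L := by simp [hx]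
  refine LinearMap.ext_on_range ((linearIndependent_pow x).span_eq_top_of_card_eq_finrank' hcard)
    fun i => h i (hx ▸ i.isLt)

theorem Matrix.linearMap_eq_comp_entryLinearMap {m n R α β : Type*} [Finite m] [Finite n]
    [DecidableEq m] [DecidableEq n] [Semiring R] [AddCommMonoid α] [AddCommMonoid β]
    [Module R α] [Module R β] (ξ : Matrix m n α →ₗ[R] β) (i₀ : m) (j₀ : n)
    (h : ∀ i j, (i, j) ≠ (i₀, j₀) → ξ ∘ₗ singleLinearMap R i j = 0) :
    ξ = (ξ ∘ₗ singleLinearMap R i₀ j₀) ∘ₗ entryLinearMap R α i₀ j₀ := by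
  refine ext_linearMap R fun i j => ?_
  by_cases hij : (i, j) = (i₀, j₀)
  · obtain ⟨rfl, rfl⟩ := Prod.ext_iff.mp hij
    ext x; simp
  · rw [h i j hij]
    ext x
    obtain hi | hj := not_and_or.mp (Prod.mk.injEq .. ▸ hij)
    · simp [single_apply_of_row_ne hi]
    · simp [single_apply_of_col_ne _ _ hj]

namespace GaloisField

variable {a : GaloisField 2 3}

theorem add_sq_add_pow_four_eq_one (ha : a ^ 3 + a ^ 2 + 1 = 0) : a + a ^ 2 + a ^ 4 = 1 := by
  linear_combination (a - 1) * ha + a ^ 2 * CharTwo.two_eq_zero (R := GaloisField 2 3)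

theorem notMem_range_algebraMap (ha : a ^ 3 + a ^ 2 + 1 = 0) :
    a ∉ (algebraMap (ZMod 2) (GaloisField 2 3)).range := by
  rintro ⟨c, rfl⟩
  obtain rfl | rfl : c = 0 ∨ c = 1 := by clear ha; revert c; decide
  all_goals simp [CharTwo.add_self_eq_zero] at ha

theorem natDegree_minpoly_eq_finrank (ha : a ^ 3 + a ^ 2 + 1 = 0) :
    (minpoly (ZMod 2) a).natDegree = Module.finrank (ZMod 2) (GaloisField 2 3) := by
  refine minpoly.natDegree_eq_finrank_of_prime ?_ (notMem_range_algebraMap ha)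
  rw [finrank 2 three_ne_zero]
  exact Nat.prime_three

theorem linearMap_ext_of_frobenius_orbit {M : Type*} [AddCommMonoid M] [Module (ZMod 2) M]
    (ha : a ^ 3 + a ^ 2 + 1 = 0) {f g : GaloisField 2 3 →ₗ[ZMod 2] M}
    (h : ∀ i : Fin 3, f (a ^ 2 ^ (i : ℕ)) = g (a ^ 2 ^ (i : ℕ))) : f = g := by
  have h1 : f (a ^ 1) = g (a ^ 1) := h 0
  have h2 : f (a ^ 2) = g (a ^ 2) := h 1
  have h0 : f (a ^ 0) = g (a ^ 0) := by
    rw [pow_zero, ← add_sq_add_pow_four_eq_one ha, map_add, map_add, map_add, map_add]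
    simpa using congr($h1 + $h2 + $(h 2))
  refine LinearMap.ext_pow_of_natDegree_minpoly_eq_finrank (natDegree_minpoly_eq_finrank ha) ?_
  rw [GaloisField.finrank 2 three_ne_zero]
  intro i hi
  interval_cases i <;> assumption

end GaloisField

/-- with `A = M₂(F₈)`, `σ` the entrywise Frobenius automorphism and
`δ(X) = M X - σ(X) M` for `M = diag(0, a)`, the `F₂`-linear map `ξ : A → F₂`
determined on the basis `{a^{2^i} e_j}` by `ξ(a^{2^i} e₀) = 1` and
`ξ(a^{2^i} e_j) = 0` for `j = 1, 2, 3` satisfies `ξ 1 = 1`, `ξ ∘ σ = ξ` and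
`ξ ∘ δ = 0`. -/
theorem matrix_split_functional
    (a : GaloisField 2 3) (ha : a ^ 3 + a ^ 2 + 1 = 0)
    (ξ : Matrix (Fin 2) (Fin 2) (GaloisField 2 3) →ₗ[ZMod 2] ZMod 2)
    (h0 : ∀ i : Fin 3, ξ (Matrix.single 0 0 (a ^ 2 ^ (i : ℕ))) = 1)
    (h1 : ∀ i : Fin 3, ξ (Matrix.single 0 1 (a ^ 2 ^ (i : ℕ))) = 0)
    (h2 : ∀ i : Fin 3, ξ (Matrix.single 1 0 (a ^ 2 ^ (i : ℕ))) = 0)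
    (h3 : ∀ i : Fin 3, ξ (Matrix.single 1 1 (a ^ 2 ^ (i : ℕ))) = 0) :
    ξ 1 = 1 ∧
    (∀ Y : Matrix (Fin 2) (Fin 2) (GaloisField 2 3),
      ξ (Y.map fun x => x * x) = ξ Y) ∧
    (∀ Y : Matrix (Fin 2) (Fin 2) (GaloisField 2 3),
      ξ (Matrix.single 1 1 a * Y -
          (Y.map fun x => x * x) * Matrix.single 1 1 a) = 0) := by
  set φ := ξ ∘ₗ Matrix.singleLinearMap (ZMod 2) 0 0
  have hφ₀ : ∀ i : Fin 3, φ (a ^ 2 ^ (i : ℕ)) = 1 := h0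
  have hξ : ∀ Y, ξ Y = φ (Y 0 0) := by
    refine LinearMap.congr_fun (Matrix.linearMap_eq_comp_entryLinearMap ξ 0 0 fun i j hij => ?_)
    refine GaloisField.linearMap_ext_of_frobenius_orbit ha fun k => ?_
    fin_cases i <;> fin_cases j
    exacts [absurd rfl hij, h1 k, h2 k, h3 k]
  have hφ : φ ∘ₗ (FiniteField.frobeniusAlgHom (ZMod 2) (GaloisField 2 3)).toLinearMap = φ := by
    refine LinearMap.ext_pow_of_natDegree_minpoly_eq_finrank
      (GaloisField.natDegree_minpoly_eq_finrank ha) ?_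
    rw [GaloisField.finrank 2 three_ne_zero]
    intro i hi
    interval_cases i
    · simp
    · simpa using (hφ₀ 1).trans (hφ₀ 0).symm
    · simpa [← pow_mul] using (hφ₀ 2).trans (hφ₀ 1).symm
  refine ⟨?_, fun Y => ?_, fun Y => ?_⟩
  · rw [hξ, Matrix.one_apply_eq, ← GaloisField.add_sq_add_pow_four_eq_one ha]
    have h111 : (1 + 1 + 1 : ZMod 2) = 1 := rfl
    simpa [h111] using congr($(hφ₀ 0) + $(hφ₀ 1) + $(hφ₀ 2))
  · simpa [hξ, sq] using LinearMap.congr_fun hφ (Y 0 0)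
  · simp [hξ, Matrix.mul_apply]
end

section
/- With A = M₂(F₈), σ the entrywise Frobenius automorphism, and δ(X) = MX − σ(X)M for M = diag(0,a), the element p = Σ_{i=0}^{2} (a^{2^i} E₁₁) ⊗ (a^{2^i} E₁₁) + Σ_{i=0}^{2} (a^{2^i} E₂₁) ⊗ (a^{2^i} E₁₂) ∈ A ⊗_{F₂} A is a separability element of A over F₂ (i.e. Xp = pX for all X ∈ A and μ(p) = 1) that satisfies σ⊗(p) = p and δ⊗(p) = 0. -/
open scoped TensorProduct

set_option maxHeartbeats 1000000

/-- `A = M₂(F₈)`, as a 12-dimensional `F₂`-algebra. -/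
noncomputable abbrev MatF8 : Type := Matrix (Fin 2) (Fin 2) (GaloisField 2 3)

/-- The entrywise Frobenius automorphism `σ : X ↦ (x_{ij}²)` of `M₂(F₈)`. -/
noncomputable def frobM (Y : MatF8) : MatF8 := Y.map fun x => x * x

/-- The matrix `M = diag(0, a)`. -/
noncomputable def diagM (a : GaloisField 2 3) : MatF8 := Matrix.single 1 1 a

/-- The inner `σ`-derivation `δ(X) = M X - σ(X) M`. -/
noncomputable def delM (a : GaloisField 2 3) (Y : MatF8) : MatF8 :=
  diagM a * Y - frobM Y * diagM a

/-- The basis elements `a^{2^i} E_{kl}` of `M₂(F₈)` over `F₂`. -/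
noncomputable def sbm (a : GaloisField 2 3) (k l : Fin 2) (i : Fin 3) : MatF8 :=
  Matrix.single k l (a ^ 2 ^ (i : ℕ))

/-!
The elements `a, a², a⁴` form a normal basis of `F₈/F₂` that is self-dual for the trace form
`(u, v) ↦ Tr(uv)`, `Tr z = z + z² + z⁴`. Hence `e = ∑ᵢ a^{2^i} ⊗ a^{2^i}` is the Casimir element
of the trace form, `(b ⊗ 1) e = (1 ⊗ b) e` for every `b ∈ F₈`, and `p` is `e` multiplied by the
standard separability element `∑ⱼ E_{j1} ⊗ E_{1j}` of `M₂`: this gives `Y p = p Y`, and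
`μ(p) = ∑ᵢ a^{2^{i+1}} = Tr a = 1`. The Frobenius permutes the basis cyclically, so `σ⊗(p) = p`.
Finally `δ` kills `c E₁₁` and sends `c E₂₁ ↦ a c E₂₁`, `c E₁₂ ↦ -a c² E₁₂`, so after reindexing
by the Frobenius the two halves of `δ⊗(p)` cancel by the Casimir property.
-/

open Matrix TensorProduct

section Casimir

variable {R A ι : Type*} [CommSemiring R] [CommSemiring A] [Algebra R A] [Fintype ι]

theorem sum_mul_tmul_eq_sum_tmul_mul (t : A → R) (x y : ι → A)
    (hx : ∀ z, ∑ j, t (z * y j) • x j = z) (hy : ∀ z, ∑ j, t (z * x j) • y j = z) (b : A) :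
    ∑ i, (b * x i) ⊗ₜ[R] y i = ∑ i, x i ⊗ₜ[R] (b * y i) := by
  have expand_left (i : ι) : (b * x i) ⊗ₜ[R] y i = ∑ j, t (b * x i * y j) • (x j ⊗ₜ[R] y i) := by
    conv_lhs => rw [← hx (b * x i)]
    simp only [sum_tmul, smul_tmul']
  have expand_right (i : ι) : x i ⊗ₜ[R] (b * y i) = ∑ j, t (b * y i * x j) • (x i ⊗ₜ[R] y j) := by
    conv_lhs => rw [← hy (b * y i)]
    simp only [tmul_sum, tmul_smul]
  simp only [expand_left, expand_right]
  rw [Finset.sum_comm]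
  simp only [mul_right_comm b]

variable {n : Type*} [DecidableEq n]

theorem sum_single_mul_tmul_single_eq_sum_single_tmul_single_mul (x y : ι → A)
    (hxy : ∀ b, ∑ i, (b * x i) ⊗ₜ[R] y i = ∑ i, x i ⊗ₜ[R] (b * y i)) (k l p q : n) (b : A) :
    ∑ i, single k l (b * x i) ⊗ₜ[R] single p q (y i) =
      ∑ i, single k l (x i) ⊗ₜ[R] single p q (b * y i) := by
  simpa only [map_sum, map_tmul, singleLinearMap_apply] using
    congrArg (TensorProduct.map (singleLinearMap R k l) (singleLinearMap R p q)) (hxy b)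

variable [Fintype n]

theorem sum_sum_mul_single_tmul_single_eq (x y : ι → A)
    (hxy : ∀ b, ∑ i, (b * x i) ⊗ₜ[R] y i = ∑ i, x i ⊗ₜ[R] (b * y i)) (o : n) (Y : Matrix n n A) :
    ∑ j, ∑ i, (Y * single j o (x i)) ⊗ₜ[R] single o j (y i) =
      ∑ j, ∑ i, single j o (x i) ⊗ₜ[R] (single o j (y i) * Y) := by
  induction Y using Matrix.induction_on' with
  | h_zero => simp
  | h_add P Q hP hQ =>
    simp only [add_mul, mul_add, add_tmul, tmul_add, Finset.sum_add_distrib, hP, hQ]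
  | h_std_basis k l c =>
    rw [Finset.sum_eq_single l, Finset.sum_eq_single k]
    · simpa [mul_comm] using
        sum_single_mul_tmul_single_eq_sum_single_tmul_single_mul x y hxy k o o l c
    · intro j _ hj; simp [single_mul_single_of_ne _ _ _ _ hj]
    · simp
    · intro j _ hj; simp [single_mul_single_of_ne _ _ _ _ (Ne.symm hj)]
    · simp

theorem sum_sum_single_mul_single_eq_one (x y : ι → A) (hxy : ∑ i, x i * y i = 1) (o : n) :
    ∑ j, ∑ i, single j o (x i) * single o j (y i) = (1 : Matrix n n A) := by
  simp only [single_mul_single_same]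
  rw [← sum_single_one, ← hxy]
  exact Finset.sum_congr rfl fun j _ => (map_sum (singleAddMonoidHom (α := A) j j) _ _).symm

end Casimir

section F8

variable {a : GaloisField 2 3}

theorem GaloisField.algebraMap_trace_two_three (z : GaloisField 2 3) :
    algebraMap (ZMod 2) _ (Algebra.trace (ZMod 2) (GaloisField 2 3) z) = z + z ^ 2 + z ^ 4 := by
  rw [FiniteField.algebraMap_trace_eq_sum_pow, GaloisField.finrank 2 three_ne_zero]
  simp [Finset.sum_range_succ]

theorem sum_trace_mul_smul_eq_self (ha : a ^ 3 + a ^ 2 + 1 = 0) (z : GaloisField 2 3) :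
    ∑ i : Fin 3, Algebra.trace (ZMod 2) _ (z * a ^ 2 ^ (i : ℕ)) • a ^ 2 ^ (i : ℕ) = z := by
  norm_num [Algebra.smul_def, GaloisField.algebraMap_trace_two_three, Fin.sum_univ_three]
  grind

theorem sum_frobenius_pow_two_pow {M : Type*} [AddCommMonoid M] (ha : a ^ 3 + a ^ 2 + 1 = 0)
    (f : GaloisField 2 3 → M) :
    ∑ i : Fin 3, f (a ^ 2 ^ (i : ℕ) * a ^ 2 ^ (i : ℕ)) = ∑ i : Fin 3, f (a ^ 2 ^ (i : ℕ)) := by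
  have sq_a : a * a = a ^ 2 := by ring
  have sq_a2 : a ^ 2 * a ^ 2 = a ^ 4 := by ring
  have sq_a4 : a ^ 4 * a ^ 4 = a := by grind
  simp only [Fin.sum_univ_three, Fin.val_zero, Fin.val_one, Fin.val_two, pow_zero, pow_one,
    show 2 ^ 2 = 4 from rfl, sq_a, sq_a2, sq_a4]
  abel

theorem sum_mul_pow_two_pow_tmul_eq_sum_tmul_mul (ha : a ^ 3 + a ^ 2 + 1 = 0)
    (b : GaloisField 2 3) :
    ∑ i : Fin 3, (b * a ^ 2 ^ (i : ℕ)) ⊗ₜ[ZMod 2] (a ^ 2 ^ (i : ℕ)) =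
      ∑ i : Fin 3, (a ^ 2 ^ (i : ℕ)) ⊗ₜ[ZMod 2] (b * a ^ 2 ^ (i : ℕ)) :=
  sum_mul_tmul_eq_sum_tmul_mul _ _ _ (sum_trace_mul_smul_eq_self ha)
    (sum_trace_mul_smul_eq_self ha) b

theorem sum_pow_two_pow_mul_self (ha : a ^ 3 + a ^ 2 + 1 = 0) :
    ∑ i : Fin 3, a ^ 2 ^ (i : ℕ) * a ^ 2 ^ (i : ℕ) = 1 := by
  refine (sum_frobenius_pow_two_pow ha id).trans ?_
  norm_num [Fin.sum_univ_three]
  grind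

end F8

theorem frobM_single (k l : Fin 2) (c : GaloisField 2 3) :
    frobM (single k l c) = single k l (c * c) := by
  ext i j
  by_cases h : k = i ∧ l = j <;> simp [frobM, h]

theorem delM_single_zero_zero (a c : GaloisField 2 3) : delM a (single 0 0 c) = 0 := by
  simp [delM, diagM, frobM_single]

theorem delM_single_one_zero (a c : GaloisField 2 3) :
    delM a (single 1 0 c) = single 1 0 (a * c) := by
  simp [delM, diagM, frobM_single]

theorem delM_single_zero_one (a c : GaloisField 2 3) :
    delM a (single 0 1 c) = -single 0 1 (c * c * a) := by
  simp [delM, diagM, frobM_single]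

/-- with `A = M₂(F₈)` (where `F₈ = F₂(a)`, `a³ + a² + 1 = 0`), `σ` the
entrywise Frobenius automorphism and `δ(X) = M X - σ(X) M` for `M = diag(0,a)`, the
element `p = ∑_{i=0}^{2} (a^{2^i} E₁₁) ⊗ (a^{2^i} E₁₁) + ∑_{i=0}^{2} (a^{2^i} E₂₁) ⊗ (a^{2^i} E₁₂)`
of `A ⊗_{F₂} A` is a separability element of `A` over `F₂` — `Y p = p Y` for every
`Y ∈ A` and `μ(p) = 1` — satisfying moreover `σ⊗(p) = p` and `δ⊗(p) = 0`, where
`σ⊗(u ⊗ v) = σ u ⊗ σ v` and `δ⊗(u ⊗ v) = σ u ⊗ δ v + δ u ⊗ v` (both stated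
termwise on the simple tensors constituting `p`). -/
theorem matrix_separability_element
    (a : GaloisField 2 3) (ha : a ^ 3 + a ^ 2 + 1 = 0) :
    (∀ Y : MatF8,
      ((∑ i : Fin 3, (Y * sbm a 0 0 i) ⊗ₜ[ZMod 2] sbm a 0 0 i) +
        ∑ i : Fin 3, (Y * sbm a 1 0 i) ⊗ₜ[ZMod 2] sbm a 0 1 i) =
      ((∑ i : Fin 3, sbm a 0 0 i ⊗ₜ[ZMod 2] (sbm a 0 0 i * Y)) +
        ∑ i : Fin 3, sbm a 1 0 i ⊗ₜ[ZMod 2] (sbm a 0 1 i * Y))) ∧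
    ((∑ i : Fin 3, sbm a 0 0 i * sbm a 0 0 i) +
      ∑ i : Fin 3, sbm a 1 0 i * sbm a 0 1 i) = 1 ∧
    ((∑ i : Fin 3, frobM (sbm a 0 0 i) ⊗ₜ[ZMod 2] frobM (sbm a 0 0 i)) +
      ∑ i : Fin 3, frobM (sbm a 1 0 i) ⊗ₜ[ZMod 2] frobM (sbm a 0 1 i)) =
      ((∑ i : Fin 3, sbm a 0 0 i ⊗ₜ[ZMod 2] sbm a 0 0 i) +
        ∑ i : Fin 3, sbm a 1 0 i ⊗ₜ[ZMod 2] sbm a 0 1 i) ∧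
    ((∑ i : Fin 3,
        (frobM (sbm a 0 0 i) ⊗ₜ[ZMod 2] delM a (sbm a 0 0 i) +
          delM a (sbm a 0 0 i) ⊗ₜ[ZMod 2] sbm a 0 0 i)) +
      ∑ i : Fin 3,
        (frobM (sbm a 1 0 i) ⊗ₜ[ZMod 2] delM a (sbm a 0 1 i) +
          delM a (sbm a 1 0 i) ⊗ₜ[ZMod 2] sbm a 0 1 i)) = 0 := by
  have casimir := sum_mul_pow_two_pow_tmul_eq_sum_tmul_mul ha
  refine ⟨fun Y => ?_, ?_, ?_, ?_⟩
  · simpa [Fin.sum_univ_two, sbm] using sum_sum_mul_single_tmul_single_eq _ _ casimir 0 Y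
  · simpa [Fin.sum_univ_two, sbm] using
      sum_sum_single_mul_single_eq_one _ _ (sum_pow_two_pow_mul_self ha) (0 : Fin 2)
  · simp only [sbm, frobM_single]
    rw [sum_frobenius_pow_two_pow ha fun c => single 0 0 c ⊗ₜ[ZMod 2] single 0 0 c,
      sum_frobenius_pow_two_pow ha fun c => single 1 0 c ⊗ₜ[ZMod 2] single 0 1 c]
  · simp only [sbm, frobM_single, delM_single_zero_zero, delM_single_one_zero,
      delM_single_zero_one, tmul_zero, zero_tmul, add_zero, Finset.sum_const_zero, zero_add,
      tmul_neg, Finset.sum_add_distrib]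
    rw [sum_frobenius_pow_two_pow ha fun c => -(single 1 0 c ⊗ₜ[ZMod 2] single 0 1 (c * a)),
      sum_single_mul_tmul_single_eq_sum_single_tmul_single_mul _ _ casimir]
    simp [mul_comm]
end
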